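/- arXiv:1909.09909 — 13 statements merged into one kernel-verified Lean document; each statement's English description precedes it below -/
import Mathlib

section
/- Let h : [-1,1] → ℝ be a strictly convex function and a, b ∈ ℝ with |a| + |b| ≤ 1 and b ≠ 0. Then the function F(t) := h(a + b*t) + h(a - b*t) is strictly increasing on [0,1]. -/
theorem stmt_0 (h : ℝ → ℝ) (hconv : StrictConvexOn ℝ (Set.Icc (-1 : ℝ) 1) h)
    (a b : ℝ) (hab : |a| + |b| ≤ 1) (hb : b ≠ 0) :
    StrictMonoOn (fun t : ℝ => h (a + b * t) + h (a - b * t)) (Set.Icc (0 : ℝ) 1) := by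
  intro s hs t ht hst
  obtain ⟨hs0, hs1⟩ := hs
  obtain ⟨ht0, ht1⟩ := ht
  have htpos : 0 < t := lt_of_le_of_lt hs0 hst
  have key : ∀ u : ℝ, |u| ≤ 1 → a + b * u ∈ Set.Icc (-1 : ℝ) 1 := by
    intro u hu
    have h1 : |a + b * u| ≤ 1 := by
      calc |a + b * u| ≤ |a| + |b * u| := abs_add_le _ _
        _ = |a| + |b| * |u| := by rw [abs_mul]
        _ ≤ |a| + |b| * 1 := by gcongr
        _ ≤ 1 := by linarith
    exact ⟨(abs_le.mp h1).1, (abs_le.mp h1).2⟩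
  have hxt : a + b * t ∈ Set.Icc (-1 : ℝ) 1 := key t (by rw [abs_of_nonneg (le_of_lt htpos)]; exact ht1)
  have hyt : a - b * t ∈ Set.Icc (-1 : ℝ) 1 := by
    have := key (-t) (by rw [abs_neg, abs_of_nonneg (le_of_lt htpos)]; exact ht1)
    simpa [mul_neg, sub_eq_add_neg] using this
  have hne : a + b * t ≠ a - b * t := by
    intro hEq
    have : b * t = 0 := by linarith [hEq]
    rcases mul_eq_zero.mp this with h' | h'
    · exact hb h'
    · exact (ne_of_gt htpos) h'
  set lam := (t + s) / (2 * t) with hlam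
  set mu := (t - s) / (2 * t) with hmu
  have hlampos : 0 < lam := by positivity
  have hmupos : 0 < mu := by
    apply div_pos <;> linarith
  have hsum : lam + mu = 1 := by
    rw [hlam, hmu, ← add_div, div_eq_one_iff_eq (by positivity)]
    ring
  have ht0' : t ≠ 0 := ne_of_gt htpos
  have e1 : lam • (a + b * t) + mu • (a - b * t) = a + b * s := by
    simp only [smul_eq_mul, hlam, hmu]
    field_simp
    ring
  have e2 : mu • (a + b * t) + lam • (a - b * t) = a - b * s := by
    simp only [smul_eq_mul, hlam, hmu]
    field_simp
    ring
  have H1 := hconv.2 hxt hyt hne hlampos hmupos hsum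
  have H2 := hconv.2 hxt hyt hne hmupos hlampos (by linarith)
  rw [e1] at H1
  rw [e2] at H2
  simp only [smul_eq_mul] at H1 H2
  have h3 : lam * h (a + b * t) + mu * h (a - b * t) +
      (mu * h (a + b * t) + lam * h (a - b * t)) = h (a + b * t) + h (a - b * t) := by
    linear_combination (h (a + b * t) + h (a - b * t)) * hsum
  simp only
  linarith
end

section
/- Let A = (a_{ij}) be an m × m real matrix, m ≥ 3, with zero diagonal (a_{ii} = 0 for all i) and zero row sums (∑_j a_{ij} = 0 for all i). Let x_j := ∑_i a_{ij} denote the column sums. Then ∑_{i<j} (a_{ij} + a_{ji})² ≥ (1/(m-2)) ∑_j x_j². -/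
open Finset

lemma half_sum {m : ℕ} (g : Fin m → Fin m → ℝ) (hsym : ∀ i j, g i j = g j i) :
    2 * ∑ i, ∑ j ∈ univ.filter (fun j => i < j), g i j
      = (∑ i, ∑ j, g i j) - ∑ i, g i i := by
  have h1 : ∑ i, ∑ j ∈ univ.filter (fun j => i < j), g i j
      = ∑ i, ∑ j, if i < j then g i j else 0 := by
    simp [Finset.sum_filter]
  have h2 : ∑ i, ∑ j, (if i < j then g i j else 0)
      = ∑ i, ∑ j, (if j < i then g i j else 0) := by
    rw [Finset.sum_comm]
    exact Finset.sum_congr rfl fun j _ => Finset.sum_congr rfl fun i _ => by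
      rw [hsym]
  have h3 : ∀ i j : Fin m, g i j =
      (if i < j then g i j else 0) + (if j < i then g i j else 0)
        + (if i = j then g i j else 0) := by
    intro i j
    rcases lt_trichotomy i j with h | h | h
    · simp [h, h.ne, not_lt_of_gt h]
    · simp [h]
    · simp [h, h.ne', not_lt_of_gt h]
  have h4 : ∑ i, ∑ j, g i j
      = (∑ i, ∑ j, (if i < j then g i j else 0))
        + (∑ i, ∑ j, (if j < i then g i j else 0))
        + (∑ i, ∑ j, (if i = j then g i j else 0)) := by
    rw [← Finset.sum_add_distrib, ← Finset.sum_add_distrib]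
    refine Finset.sum_congr rfl fun i _ => ?_
    rw [← Finset.sum_add_distrib, ← Finset.sum_add_distrib]
    exact Finset.sum_congr rfl fun j _ => h3 i j
  have h5 : ∑ i, ∑ j, (if i = j then g i j else 0) = ∑ i, g i i := by
    refine Finset.sum_congr rfl fun i _ => ?_
    simp
  rw [h1, h4, h5, ← h2]
  ring

theorem stmt_2 (m : ℕ) (hm : 3 ≤ m) (A : Matrix (Fin m) (Fin m) ℝ)
    (hdiag : ∀ i, A i i = 0) (hrow : ∀ i, ∑ j, A i j = 0) :
    ∑ i, ∑ j ∈ univ.filter (fun j => i < j), (A i j + A j i) ^ 2 ≥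
      (1 / (m - 2 : ℝ)) * ∑ j, (∑ i, A i j) ^ 2 := by
  set x : Fin m → ℝ := fun j => ∑ i, A i j with hx
  set c : ℝ := (m : ℝ) - 2 with hcdef
  have hm3 : (3 : ℝ) ≤ (m : ℝ) := by exact_mod_cast hm
  have hc : (0 : ℝ) < c := by simp only [hcdef]; linarith
  have hc0 : c ≠ 0 := ne_of_gt hc
  have hsumx : ∑ j, x j = 0 := by
    simp only [hx]
    rw [Finset.sum_comm]
    simp [hrow]
  have hrowS : ∀ i, ∑ j, (A i j + A j i) = x i := by
    intro i
    rw [Finset.sum_add_distrib, hrow]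
    simp [hx]
  have hcolS : ∀ j, ∑ i, (A i j + A j i) = x j := by
    intro j
    rw [Finset.sum_add_distrib, hrow]
    simp [hx]
  set P : ℝ := ∑ j, x j ^ 2 with hP
  -- L1
  have L1 : ∑ i, ∑ j ∈ univ.filter (fun j => i < j),
      ((A i j + A j i) * (x i + x j)) = P := by
    have h := half_sum (fun i j => (A i j + A j i) * (x i + x j))
      (fun i j => by ring)
    have p1 : ∑ i, ∑ j, (A i j + A j i) * x i = P := by
      refine Finset.sum_congr rfl fun i _ => ?_
      rw [← Finset.sum_mul, hrowS]; ring
    have p2 : ∑ i, ∑ j, (A i j + A j i) * x j = P := by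
      rw [Finset.sum_comm]
      refine Finset.sum_congr rfl fun j _ => ?_
      rw [← Finset.sum_mul, hcolS]; ring
    have hfull : ∑ i, ∑ j, (A i j + A j i) * (x i + x j) = 2 * P := by
      have e1 : ∀ i j : Fin m, (A i j + A j i) * (x i + x j)
          = (A i j + A j i) * x i + (A i j + A j i) * x j := fun i j => by ring
      simp only [e1, Finset.sum_add_distrib]
      rw [p1, p2]; ring
    have hdiagsum : ∑ i, (A i i + A i i) * (x i + x i) = 0 := by
      simp [hdiag]
    simp only [hfull, hdiagsum] at h
    linarith
  -- L2
  have L2 : ∑ i, ∑ j ∈ univ.filter (fun j => i < j), (x i + x j) ^ 2 = c * P := by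
    have h := half_sum (fun i j => (x i + x j) ^ 2) (fun i j => by ring)
    have hfull : ∑ i, ∑ j, (x i + x j) ^ 2 = 2 * (m : ℝ) * P := by
      have e1 : ∀ i j : Fin m, (x i + x j) ^ 2
          = x i ^ 2 + 2 * x i * x j + x j ^ 2 := fun i j => by ring
      simp only [e1, Finset.sum_add_distrib]
      have t1 : ∑ i : Fin m, ∑ _j : Fin m, x i ^ 2 = (m : ℝ) * P := by
        simp [Finset.sum_const, Finset.card_univ, ← Finset.sum_mul, mul_comm,
          Finset.mul_sum]
        rw [← Finset.mul_sum]
      have t2 : ∑ i : Fin m, ∑ j : Fin m, 2 * x i * x j = 0 := by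
        simp [← Finset.mul_sum, hsumx]
      have t3 : ∑ _i : Fin m, ∑ j : Fin m, x j ^ 2 = (m : ℝ) * P := by
        simp [Finset.sum_const, Finset.card_univ, ← hP]
      rw [t1, t2, t3]; ring
    have hdiagsum : ∑ i, (x i + x i) ^ 2 = 4 * P := by
      have : ∀ i : Fin m, (x i + x i) ^ 2 = 4 * x i ^ 2 := fun i => by ring
      simp only [this, ← Finset.mul_sum, ← hP]
    simp only [hfull, hdiagsum] at h
    simp only [hcdef]
    linarith
  -- expansion
  have expand : ∑ i, ∑ j ∈ univ.filter (fun j => i < j),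
      ((A i j + A j i) - (x i + x j) / c) ^ 2
      = (∑ i, ∑ j ∈ univ.filter (fun j => i < j), (A i j + A j i) ^ 2)
        - (2 / c) * (∑ i, ∑ j ∈ univ.filter (fun j => i < j),
            ((A i j + A j i) * (x i + x j)))
        + (1 / c ^ 2) * (∑ i, ∑ j ∈ univ.filter (fun j => i < j),
            (x i + x j) ^ 2) := by
    have e1 : ∀ i j : Fin m, ((A i j + A j i) - (x i + x j) / c) ^ 2
        = (A i j + A j i) ^ 2 - (2 / c) * ((A i j + A j i) * (x i + x j))
          + (1 / c ^ 2) * (x i + x j) ^ 2 := by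
      intro i j; field_simp; ring
    simp only [e1, Finset.sum_add_distrib, Finset.sum_sub_distrib,
      ← Finset.mul_sum]
  have tnn : (0 : ℝ) ≤ ∑ i, ∑ j ∈ univ.filter (fun j => i < j),
      ((A i j + A j i) - (x i + x j) / c) ^ 2 :=
    Finset.sum_nonneg fun i _ => Finset.sum_nonneg fun j _ => sq_nonneg _
  rw [expand, L1, L2] at tnn
  have key : (1 / c ^ 2) * (c * P) = (1 / c) * P := by
    field_simp
  rw [key] at tnn
  have : (1 / c) * P ≤ ∑ i, ∑ j ∈ univ.filter (fun j => i < j),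
      (A i j + A j i) ^ 2 := by
    have h2c : 2 / c * P - 1 / c * P = 1 / c * P := by
      field_simp; ring
    linarith
  simpa [hP, hx, hcdef] using this
end

section
/- Let F = (f_{ij}) be an m × n real matrix with all row sums zero, and G = (g_{ij}) an n × m real matrix with all row sums zero. Set y_j := ∑_{i=1}^m f_{ij} and z_i := ∑_{j=1}^n g_{ji}. Then ∑_{i=1}^m ∑_{j=1}^n (f_{ij} + g_{ji})² ≥ (1/m) ∑_{j=1}^n y_j² + (1/n) ∑_{i=1}^m z_i². -/
open Finset

lemma aux_expand (m n : ℕ) (a : Fin m → Fin n → ℝ) (b : Fin m → ℝ) (c : Fin n → ℝ)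
    (hb : ∀ i, ∑ j, a i j = n * b i) (hc : ∀ j, ∑ i, a i j = m * c j)
    (hbs : ∑ i, b i = 0) (hcs : ∑ j, c j = 0) :
    ∑ i, ∑ j, a i j ^ 2 ≥ n * ∑ i, b i ^ 2 + m * ∑ j, c j ^ 2 := by
  have key : 0 ≤ ∑ i, ∑ j, (a i j - b i - c j) ^ 2 := by positivity
  have t0 : ∑ i, ∑ j, (a i j - b i - c j) ^ 2
      = ∑ i, ∑ j, a i j ^ 2 + ∑ i : Fin m, ∑ j : Fin n, b i ^ 2
        + ∑ i : Fin m, ∑ j : Fin n, c j ^ 2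
        - 2 * ∑ i, ∑ j, a i j * b i - 2 * ∑ i, ∑ j, a i j * c j
        + 2 * ∑ i, ∑ j, b i * c j := by
    have h : ∀ i j, (a i j - b i - c j) ^ 2
        = a i j ^ 2 + b i ^ 2 + c j ^ 2 - 2 * (a i j * b i) - 2 * (a i j * c j)
          + 2 * (b i * c j) := fun i j => by ring
    simp only [h, Finset.sum_add_distrib, Finset.sum_sub_distrib, Finset.mul_sum]
  have t1 : ∑ i, ∑ j, a i j * b i = n * ∑ i, b i ^ 2 := by
    rw [Finset.mul_sum]
    apply Finset.sum_congr rfl; intro i _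
    rw [← Finset.sum_mul, hb i]; ring
  have t2 : ∑ i, ∑ j, a i j * c j = m * ∑ j, c j ^ 2 := by
    rw [Finset.sum_comm, Finset.mul_sum]
    apply Finset.sum_congr rfl; intro j _
    rw [← Finset.sum_mul, hc j]; ring
  have t3 : ∑ i, ∑ j, b i * c j = (∑ i, b i) * (∑ j, c j) := by
    rw [Finset.sum_mul]
    apply Finset.sum_congr rfl; intro i _
    rw [Finset.mul_sum]
  have t4 : ∑ i : Fin m, ∑ j : Fin n, b i ^ 2 = n * ∑ i, b i ^ 2 := by
    simp [Finset.sum_const, Finset.mul_sum, mul_comm]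
  have t5 : ∑ i : Fin m, ∑ j : Fin n, c j ^ 2 = m * ∑ j, c j ^ 2 := by
    simp [Finset.sum_const]
  rw [t0, t1, t2, t3, t4, t5, hbs, hcs] at key
  linarith

theorem stmt_3 (m n : ℕ) (hm : 0 < m) (hn : 0 < n)
    (F : Matrix (Fin m) (Fin n) ℝ) (G : Matrix (Fin n) (Fin m) ℝ)
    (hF : ∀ i, ∑ j, F i j = 0) (hG : ∀ i, ∑ j, G i j = 0) :
    ∑ i, ∑ j, (F i j + G j i) ^ 2 ≥
      (1 / (m : ℝ)) * ∑ j, (∑ i, F i j) ^ 2 + (1 / (n : ℝ)) * ∑ i, (∑ j, G j i) ^ 2 := by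
  have hm' : (m : ℝ) ≠ 0 := Nat.cast_ne_zero.mpr hm.ne'
  have hn' : (n : ℝ) ≠ 0 := Nat.cast_ne_zero.mpr hn.ne'
  set z : Fin m → ℝ := fun i => ∑ j, G j i with hz
  set y : Fin n → ℝ := fun j => ∑ i, F i j with hy
  have key := aux_expand m n (fun i j => F i j + G j i)
      (fun i => z i / n) (fun j => y j / m)
      (by intro i
          simp only [Finset.sum_add_distrib, hF i]
          field_simp
          exact zero_add _)
      (by intro j
          have : ∑ i, G j i = 0 := hG j
          simp only [Finset.sum_add_distrib, this]
          field_simp [hy]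
          exact add_zero _)
      (by rw [← Finset.sum_div]
          have : ∑ i, z i = 0 := by
            rw [show (∑ i, z i) = ∑ i, ∑ j, G j i from rfl, Finset.sum_comm]
            simp [hG]
          rw [this]; simp)
      (by rw [← Finset.sum_div]
          have : ∑ j, y j = 0 := by
            rw [show (∑ j, y j) = ∑ j, ∑ i, F i j from rfl, Finset.sum_comm]
            simp [hF]
          rw [this]; simp)
  have e1 : (n : ℝ) * ∑ i, (z i / n) ^ 2 = (1 / n) * ∑ i, z i ^ 2 := by
    rw [Finset.mul_sum, Finset.mul_sum]
    apply Finset.sum_congr rfl; intro i _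
    field_simp
  have e2 : (m : ℝ) * ∑ j, (y j / m) ^ 2 = (1 / m) * ∑ j, y j ^ 2 := by
    rw [Finset.mul_sum, Finset.mul_sum]
    apply Finset.sum_congr rfl; intro j _
    field_simp
  rw [e1, e2] at key
  linarith
end

section
/- Let a_1, …, a_N be real numbers with ∑_i a_i = 0, a_i ≠ 0 for all i, c := (N-1)/N, c - a_i a_j > 0 for all i ≠ j, and ∑_{j ≠ i} 1/(c - a_i a_j) = N for all i. Then ∑_{j ≠ i} a_j/(c - a_i a_j) = 0 for every i. -/
open Finset

theorem stmt_7 (N : ℕ) (hN : 2 ≤ N) (a : Fin N → ℝ)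
    (hsum : ∑ i, a i = 0) (hne : ∀ i, a i ≠ 0)
    (c : ℝ) (hc : c = ((N : ℝ) - 1) / N)
    (hpos : ∀ i j, i ≠ j → 0 < c - a i * a j)
    (hid : ∀ i, ∑ j ∈ univ.erase i, 1 / (c - a i * a j) = (N : ℝ)) :
    ∀ i, ∑ j ∈ univ.erase i, a j / (c - a i * a j) = 0 := by
  intro i
  have hNpos : (0:ℝ) < N := by positivity
  have hcard : ((univ.erase i).card : ℝ) = (N : ℝ) - 1 := by
    simp [card_erase_of_mem, Nat.cast_sub (Nat.one_le_of_lt hN)]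
  have key : a i * ∑ j ∈ univ.erase i, a j / (c - a i * a j) = 0 := by
    rw [mul_sum]
    have hstep : ∀ j ∈ univ.erase i, a i * (a j / (c - a i * a j))
        = c * (1 / (c - a i * a j)) - 1 := by
      intro j hj
      have hij : i ≠ j := (ne_of_mem_erase hj).symm
      have h := hpos i j hij
      field_simp
      ring
    rw [sum_congr rfl hstep, sum_sub_distrib, ← mul_sum, hid i, sum_const, nsmul_eq_mul,
      mul_one, hcard, hc]
    field_simp
    ring
  exact (mul_eq_zero.mp key).resolve_left (hne i)
end

section
/- Let a_1, …, a_N be real numbers with ∑_i a_i = 0, a_i ≠ 0 for all i, c := (N-1)/N, c - a_i a_j > 0 for all i ≠ j, and ∑_{j ≠ i} 1/(c - a_i a_j) = N for all i. Then for each i, ∑_{j ≠ i} (a_j² - a_i a_j)/(c - a_i a_j) = 1. -/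
open Finset

theorem stmt_8 (N : ℕ) (hN : 2 ≤ N) (a : Fin N → ℝ)
    (hsum : ∑ i, a i = 0) (hne : ∀ i, a i ≠ 0)
    (c : ℝ) (hc : c = ((N : ℝ) - 1) / N)
    (hpos : ∀ i j, i ≠ j → 0 < c - a i * a j)
    (hid : ∀ i, ∑ j ∈ univ.erase i, 1 / (c - a i * a j) = (N : ℝ)) :
    ∀ i, ∑ j ∈ univ.erase i, (a j ^ 2 - a i * a j) / (c - a i * a j) = 1 := by
  intro i
  have hN0 : (N : ℝ) ≠ 0 := by
    have : (0:ℕ) < N := by omega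
    exact_mod_cast this.ne'
  have hcN : c * N = (N : ℝ) - 1 := by rw [hc]; field_simp
  have hd : ∀ j ∈ univ.erase i, c - a i * a j ≠ 0 := by
    intro j hj
    exact (hpos i j (Ne.symm (Finset.mem_erase.mp hj).1)).ne'
  have hcardR : ((univ.erase i).card : ℝ) = (N : ℝ) - 1 := by
    rw [Finset.card_erase_of_mem (mem_univ i)]
    simp only [Finset.card_univ, Fintype.card_fin]
    have : (1:ℕ) ≤ N := by omega
    push_cast [Nat.cast_sub this]
    ring
  -- sum of a_j over erase = -a_i
  have hsum' : ∑ j ∈ univ.erase i, a j = -a i := by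
    have h := Finset.add_sum_erase univ a (mem_univ i)
    rw [hsum] at h
    linarith
  -- key: ∑ a_j/(c - a_i a_j) = 0
  have h1 : ∑ j ∈ univ.erase i, (a i * a j) / (c - a i * a j) = 0 := by
    have : ∀ j ∈ univ.erase i, (a i * a j) / (c - a i * a j)
        = c * (1 / (c - a i * a j)) - 1 := by
      intro j hj
      have hdj := hd j hj
      field_simp
      ring
    rw [Finset.sum_congr rfl this, Finset.sum_sub_distrib, ← Finset.mul_sum, hid i,
      Finset.sum_const, nsmul_eq_mul, mul_one, hcardR, hcN]
    ring
  have hS : ∑ j ∈ univ.erase i, a j / (c - a i * a j) = 0 := by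
    have h2 : a i * ∑ j ∈ univ.erase i, a j / (c - a i * a j) = 0 := by
      rw [Finset.mul_sum, ← h1]
      exact Finset.sum_congr rfl fun j hj => by ring
    rcases mul_eq_zero.mp h2 with h | h
    · exact absurd h (hne i)
    · exact h
  -- termwise decomposition
  have hterm : ∀ j ∈ univ.erase i,
      (a j ^ 2 - a i * a j) / (c - a i * a j)
        = -(a j) / a i + (c / a i - a i) * (a j / (c - a i * a j)) := by
    intro j hj
    have hdj := hd j hj
    have hai := hne i
    have hdj' : c - a j * a i ≠ 0 := by rwa [mul_comm]
    field_simp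
    ring
  rw [Finset.sum_congr rfl hterm, Finset.sum_add_distrib, ← Finset.mul_sum, hS,
    mul_zero, add_zero]
  rw [← Finset.sum_div, Finset.sum_neg_distrib, hsum', neg_neg]
  exact div_self (hne i)
end

section
/- Let a_1, …, a_N be real numbers with ∑_i a_i = 0, a_i ≠ 0 for all i, c := (N-1)/N, c - a_i a_j > 0 for all i ≠ j, and ∑_{j ≠ i} 1/(c - a_i a_j) = N for all i. Then for each i, T_i := ∑_{j ≠ i} (c - a_j²)/(c - a_i a_j) = N - 2. -/
open Finset

theorem stmt_9 (N : ℕ) (hN : 2 ≤ N) (a : Fin N → ℝ)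
    (hsum : ∑ i, a i = 0) (hne : ∀ i, a i ≠ 0)
    (c : ℝ) (hc : c = ((N : ℝ) - 1) / N)
    (hpos : ∀ i j, i ≠ j → 0 < c - a i * a j)
    (hid : ∀ i, ∑ j ∈ univ.erase i, 1 / (c - a i * a j) = (N : ℝ)) :
    ∀ i, ∑ j ∈ univ.erase i, (c - a j ^ 2) / (c - a i * a j) = (N : ℝ) - 2 := by
  intro i
  have hN0 : (N : ℝ) ≠ 0 := by
    have : (0:ℝ) < N := by exact_mod_cast Nat.lt_of_lt_of_le (by norm_num) hN
    exact this.ne'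
  have hcN : c * N = (N : ℝ) - 1 := by rw [hc]; field_simp
  have hD : ∀ j ∈ univ.erase i, c - a i * a j ≠ 0 := fun j hj =>
    (hpos i j (fun h => (mem_erase.mp hj).1 h.symm)).ne'
  have hcard : ((univ.erase i).card : ℝ) = (N : ℝ) - 1 := by
    rw [card_erase_of_mem (mem_univ i), card_univ, Fintype.card_fin,
      Nat.cast_sub (by omega)]
    simp
  have hsum' : ∑ j ∈ univ.erase i, a j = -a i := by
    rw [sum_erase_eq_sub (mem_univ i), hsum]; ring
  have hcsum : ∑ j ∈ univ.erase i, c / (c - a i * a j) = c * N := by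
    rw [← hid i, mul_sum]
    exact sum_congr rfl fun j hj => by rw [mul_one_div]
  have hS : ∑ j ∈ univ.erase i, a j / (c - a i * a j) = 0 := by
    have h1 : a i * ∑ j ∈ univ.erase i, a j / (c - a i * a j)
        = ∑ j ∈ univ.erase i, (c / (c - a i * a j) - 1) := by
      rw [mul_sum]
      refine sum_congr rfl fun j hj => ?_
      have := hD j hj
      field_simp
      ring
    have h2 : a i * ∑ j ∈ univ.erase i, a j / (c - a i * a j) = 0 := by
      rw [h1, sum_sub_distrib, hcsum, sum_const, nsmul_eq_mul, mul_one, hcard, hcN]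
      ring
    rcases mul_eq_zero.mp h2 with h | h
    · exact absurd h (hne i)
    · exact h
  have hT : ∑ j ∈ univ.erase i, a j ^ 2 / (c - a i * a j) = 1 := by
    have h1 : a i * ∑ j ∈ univ.erase i, a j ^ 2 / (c - a i * a j)
        = ∑ j ∈ univ.erase i, (c * (a j / (c - a i * a j)) - a j) := by
      rw [mul_sum]
      refine sum_congr rfl fun j hj => ?_
      have := hD j hj
      field_simp
      ring
    have h2 : a i * ∑ j ∈ univ.erase i, a j ^ 2 / (c - a i * a j) = a i * 1 := by
      rw [h1, sum_sub_distrib, ← mul_sum, hS, hsum']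
      ring
    exact mul_left_cancel₀ (hne i) h2
  have h3 : ∑ j ∈ univ.erase i, (c - a j ^ 2) / (c - a i * a j)
      = ∑ j ∈ univ.erase i, (c / (c - a i * a j) - a j ^ 2 / (c - a i * a j)) :=
    sum_congr rfl fun j hj => by rw [sub_div]
  rw [h3, sum_sub_distrib, hcsum, hT, hcN]
  ring
end

section
/- Let a_1, …, a_N be real numbers with ∑_i a_i = 0, a_i ≠ 0 for all i, c := (N-1)/N, c - a_i a_j > 0 for all i ≠ j, and ∑_{j ≠ i} 1/(c - a_i a_j) = N for all i. Then |a_i| < √c for every i. -/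
open Finset

theorem stmt_10 (N : ℕ) (hN : 2 ≤ N) (a : Fin N → ℝ)
    (hsum : ∑ i, a i = 0) (hne : ∀ i, a i ≠ 0)
    (c : ℝ) (hc : c = ((N : ℝ) - 1) / N)
    (hpos : ∀ i j, i ≠ j → 0 < c - a i * a j)
    (hid : ∀ i, ∑ j ∈ univ.erase i, 1 / (c - a i * a j) = (N : ℝ)) :
    ∀ i, |a i| < Real.sqrt c := by
  have hn2 : (2:ℝ) ≤ (N:ℝ) := by exact_mod_cast hN
  have hn0 : (N:ℝ) ≠ 0 := by linarith
  have hn1 : (N:ℝ) - 1 ≠ 0 := by linarith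
  have hcpos : 0 < c := by rw [hc]; apply div_pos <;> linarith
  have hc0 : c ≠ 0 := ne_of_gt hcpos
  have hsum_erase : ∀ i, ∑ j ∈ univ.erase i, a j = - a i := by
    intro i
    have h := Finset.add_sum_erase univ a (mem_univ i)
    rw [hsum] at h; linarith
  have hcard : ∀ i : Fin N, ((univ.erase i).card : ℝ) = (N:ℝ) - 1 := by
    intro i
    rw [Finset.card_erase_of_mem (mem_univ i), Finset.card_univ, Fintype.card_fin]
    push_cast [Nat.cast_sub (le_trans one_le_two hN)]
    ring
  -- Key identity: ∑_{j≠i} a_j² / (c - a_i a_j) = 1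
  have key : ∀ i, ∑ j ∈ univ.erase i, (a j)^2 / (c - a i * a j) = 1 := by
    intro i
    have hD : ∀ j ∈ univ.erase i, 0 < c - a i * a j := by
      intro j hj
      exact hpos i j (Ne.symm (Finset.ne_of_mem_erase hj))
    have expand : ∑ j ∈ univ.erase i, 1 / (c - a i * a j)
        = ∑ j ∈ univ.erase i,
            (1/c + (a i * a j)/c^2 + (a i)^2/c^2 * ((a j)^2/(c - a i * a j))) := by
      refine Finset.sum_congr rfl (fun j hj => ?_)
      have h1 : c - a i * a j ≠ 0 := ne_of_gt (hD j hj)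
      field_simp
      ring
    have hsplit : ∑ j ∈ univ.erase i,
            (1/c + (a i * a j)/c^2 + (a i)^2/c^2 * ((a j)^2/(c - a i * a j)))
        = ((N:ℝ)-1) * (1/c) + (a i * (- a i))/c^2
          + (a i)^2/c^2 * (∑ j ∈ univ.erase i, (a j)^2/(c - a i * a j)) := by
      rw [Finset.sum_add_distrib, Finset.sum_add_distrib,
        Finset.sum_const, ← Finset.sum_div, ← Finset.mul_sum, ← Finset.mul_sum,
        hsum_erase i, nsmul_eq_mul, hcard i]
    have h2 : ((N:ℝ)-1) * (1/c) + (a i * (- a i))/c^2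
        + (a i)^2/c^2 * (∑ j ∈ univ.erase i, (a j)^2/(c - a i * a j)) = (N:ℝ) := by
      rw [← hsplit, ← expand, hid i]
    have e1 : ((N:ℝ)-1) * (1/c) = (N:ℝ) := by rw [hc]; field_simp
    rw [e1, show a i * (- a i) = -((a i)^2) by ring, neg_div] at h2
    have hX : (a i)^2/c^2 ≠ 0 :=
      div_ne_zero (pow_ne_zero 2 (hne i)) (pow_ne_zero 2 hc0)
    have h4 : (a i)^2/c^2 * (∑ j ∈ univ.erase i, (a j)^2/(c - a i * a j))
        = (a i)^2/c^2 * 1 := by rw [mul_one]; linarith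
    exact mul_left_cancel₀ hX h4
  -- pairwise bound
  have pair : ∀ i j : Fin N, i ≠ j → (a j)^2 ≤ c - a i * a j := by
    intro i j hij
    have hj : j ∈ univ.erase i := Finset.mem_erase.mpr ⟨Ne.symm hij, mem_univ j⟩
    have h1 : (a j)^2/(c - a i * a j) ≤ 1 := by
      rw [← key i]
      exact Finset.single_le_sum (f := fun k => (a k)^2/(c - a i * a k))
        (fun k hk => div_nonneg (sq_nonneg _)
          (le_of_lt (hpos i k (Ne.symm (Finset.ne_of_mem_erase hk))))) hj
    exact (div_le_one (hpos i j hij)).mp h1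
  -- take m maximizing |a m|
  have hnonempty : Nonempty (Fin N) := ⟨⟨0, by omega⟩⟩
  obtain ⟨m, -, hm⟩ := Finset.exists_max_image (univ : Finset (Fin N))
    (fun i => |a i|) Finset.univ_nonempty
  have hm2 : (a m)^2 < c := by
    by_cases hcase : ∃ j, j ≠ m ∧ 0 < a m * a j
    · obtain ⟨j, hjm, hprod⟩ := hcase
      have h := pair j m (fun h => hjm (by rw [h]))
      nlinarith
    · push_neg at hcase
      exfalso
      have hne_erase : (univ.erase m).Nonempty := by
        rw [← Finset.card_pos, Finset.card_erase_of_mem (mem_univ m),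
          Finset.card_univ, Fintype.card_fin]
        omega
      have hlt : ∀ j ∈ univ.erase m,
          (a j)^2/(c - a m * a j) < (-(a m * a j))/(a m)^2 := by
        intro j hj
        have hjm := Finset.ne_of_mem_erase hj
        have hp0 : a m * a j ≤ 0 := hcase j hjm
        have hp : 0 < -(a m * a j) := by
          rcases lt_or_eq_of_le hp0 with h | h
          · linarith
          · exact absurd h (mul_ne_zero (hne m) (hne j))
        have hDm : 0 < c - a m * a j := hpos m j (Ne.symm hjm)
        have ham : 0 < (a m)^2 := lt_of_le_of_ne (sq_nonneg _) (Ne.symm (pow_ne_zero 2 (hne m)))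
        rw [div_lt_div_iff₀ hDm ham]
        nlinarith [mul_pos hcpos hp]
      have hsumlt := Finset.sum_lt_sum_of_nonempty hne_erase hlt
      have hR : ∑ j ∈ univ.erase m, (-(a m * a j))/(a m)^2 = 1 := by
        have hs : ∑ j ∈ univ.erase m, -(a m * a j) = (a m)^2 := by
          rw [Finset.sum_neg_distrib, ← Finset.mul_sum, hsum_erase m]; ring
        rw [← Finset.sum_div, hs, div_self (pow_ne_zero 2 (hne m))]
      rw [key m, hR] at hsumlt
      exact lt_irrefl _ hsumlt
  intro i
  have h1 : |a i| ≤ |a m| := hm i (mem_univ i)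
  have h2 : |a m| < Real.sqrt c := by
    rw [← Real.sqrt_sq_eq_abs]
    exact Real.sqrt_lt_sqrt (sq_nonneg _) hm2
  linarith
end

section
/- Let a_1, …, a_N be real numbers with a_1 ≥ … ≥ a_k > 0 > a_{k+1} ≥ … ≥ a_N, ∑_i a_i = 0, c := (N-1)/N, c - a_i a_j > 0 for all i ≠ j, and ∑_{j ≠ i} 1/(c - a_i a_j) = N for all i. Then a_1 = … = a_k and a_{k+1} = … = a_N. -/
open Finset

private lemma inv_combo_lt {u v t : ℝ} (hu : 0 < u) (hv : 0 < v) (huv : u ≠ v)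
    (ht0 : 0 < t) (ht1 : t < 1) :
    (t * u + (1 - t) * v)⁻¹ < t * u⁻¹ + (1 - t) * v⁻¹ := by
  have ht1' : 0 < 1 - t := by linarith
  have hw : 0 < t * u + (1 - t) * v := by positivity
  rw [← sub_pos]
  have key : t * u⁻¹ + (1 - t) * v⁻¹ - (t * u + (1 - t) * v)⁻¹
      = (t * (1 - t) * (u - v) ^ 2) / (u * v * (t * u + (1 - t) * v)) := by
    field_simp
    ring
  rw [key]
  have huv' : 0 < (u - v) ^ 2 := by
    have h : u - v ≠ 0 := sub_ne_zero.mpr huv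
    positivity
  exact div_pos (mul_pos (mul_pos ht0 ht1') huv') (mul_pos (mul_pos hu hv) hw)

theorem stmt_11 (N k : ℕ) (hN : 2 ≤ N) (hk1 : 1 ≤ k) (hkN : k < N)
    (a : Fin N → ℝ) (hanti : Antitone a)
    (hpos' : ∀ i : Fin N, (i : ℕ) < k → 0 < a i)
    (hneg : ∀ i : Fin N, k ≤ (i : ℕ) → a i < 0)
    (hsum : ∑ i, a i = 0)
    (c : ℝ) (hc : c = ((N : ℝ) - 1) / N)
    (hpos : ∀ i j, i ≠ j → 0 < c - a i * a j)
    (hid : ∀ i, ∑ j ∈ univ.erase i, 1 / (c - a i * a j) = (N : ℝ)) :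
    (∀ i j : Fin N, (i : ℕ) < k → (j : ℕ) < k → a i = a j) ∧
      (∀ i j : Fin N, k ≤ (i : ℕ) → k ≤ (j : ℕ) → a i = a j) := by
  have hN0 : 0 < N := by omega
  have hNR2 : (2:ℝ) ≤ (N:ℝ) := by exact_mod_cast hN
  have hNR : (0:ℝ) < (N:ℝ) := by linarith
  have hc0 : 0 < c := by rw [hc]; apply div_pos <;> linarith
  have hcN : c * (N:ℝ) = (N:ℝ) - 1 := by rw [hc]; field_simp
  have hane : ∀ i : Fin N, a i ≠ 0 := by
    intro i
    rcases lt_or_ge (i:ℕ) k with h | h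
    · exact ne_of_gt (hpos' i h)
    · exact ne_of_lt (hneg i h)
  have hcard : ∀ i : Fin N, ((univ.erase i).card : ℝ) = (N:ℝ) - 1 := by
    intro i
    rw [card_erase_of_mem (mem_univ i), card_univ, Fintype.card_fin,
      Nat.cast_sub (by omega), Nat.cast_one]
  have hsum' : ∀ i : Fin N, ∑ j ∈ univ.erase i, a j = - a i := by
    intro i
    rw [Finset.sum_erase_eq_sub (mem_univ i), hsum]
    ring
  -- first moment identity
  have hB : ∀ i : Fin N, ∑ j ∈ univ.erase i, a j / (c - a i * a j) = 0 := by
    intro i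
    have h1 : ∀ j ∈ univ.erase i, a i * (a j / (c - a i * a j))
        = c * (1 / (c - a i * a j)) - 1 := by
      intro j hj
      have hj' : j ≠ i := (mem_erase.mp hj).1
      have hd : c - a i * a j ≠ 0 := ne_of_gt (hpos i j (Ne.symm hj'))
      field_simp
      ring
    have h2 : a i * ∑ j ∈ univ.erase i, a j / (c - a i * a j)
        = ∑ j ∈ univ.erase i, (c * (1 / (c - a i * a j)) - 1) := by
      rw [Finset.mul_sum]; exact Finset.sum_congr rfl h1
    rw [Finset.sum_sub_distrib, ← Finset.mul_sum, hid i, Finset.sum_const,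
      nsmul_eq_mul, hcard i, mul_one] at h2
    have h3 : a i * ∑ j ∈ univ.erase i, a j / (c - a i * a j) = 0 := by
      rw [h2]; linarith
    rcases mul_eq_zero.mp h3 with h | h
    · exact absurd h (hane i)
    · exact h
  -- second moment identity
  have hC : ∀ i : Fin N, ∑ j ∈ univ.erase i, (a j) ^ 2 / (c - a i * a j) = 1 := by
    intro i
    have h1 : ∀ j ∈ univ.erase i, a i * ((a j) ^ 2 / (c - a i * a j))
        = c * (a j / (c - a i * a j)) - a j := by
      intro j hj
      have hj' : j ≠ i := (mem_erase.mp hj).1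
      have hd : c - a i * a j ≠ 0 := ne_of_gt (hpos i j (Ne.symm hj'))
      field_simp
      ring
    have h2 : a i * ∑ j ∈ univ.erase i, (a j) ^ 2 / (c - a i * a j)
        = ∑ j ∈ univ.erase i, (c * (a j / (c - a i * a j)) - a j) := by
      rw [Finset.mul_sum]; exact Finset.sum_congr rfl h1
    rw [Finset.sum_sub_distrib, ← Finset.mul_sum, hB i, hsum' i, mul_zero] at h2
    have h3 : a i * ∑ j ∈ univ.erase i, (a j) ^ 2 / (c - a i * a j) = a i * 1 := by
      rw [h2]; ring
    exact mul_left_cancel₀ (hane i) h3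
  -- erase is nonempty
  have hnonempty : ∀ i : Fin N, (univ.erase i).Nonempty := by
    intro i
    rw [← Finset.card_pos, card_erase_of_mem (mem_univ i), card_univ, Fintype.card_fin]
    omega
  -- a block of mutually-opposite-sign indices is impossible
  have hopp : ∀ i : Fin N, (∀ j : Fin N, j ≠ i → a i * a j < 0) → False := by
    intro i hall
    have hlt : ∀ j ∈ univ.erase i, 1 / (c - a i * a j) < 1 / c := by
      intro j hj
      have hj' : j ≠ i := (mem_erase.mp hj).1
      have h := hall j hj'
      exact one_div_lt_one_div_of_lt hc0 (by linarith)
    have hsum_lt := Finset.sum_lt_sum_of_nonempty (hnonempty i) hlt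
    rw [hid i, Finset.sum_const, nsmul_eq_mul, hcard i] at hsum_lt
    have heq : ((N:ℝ) - 1) * (1 / c) = (N:ℝ) := by
      field_simp
      linarith [hcN]
    linarith
  have hk2 : 2 ≤ k := by
    by_contra h
    have hk1' : k = 1 := by omega
    refine hopp ⟨0, hN0⟩ ?_
    intro j hj
    have hj0 : (j:ℕ) ≠ 0 := fun h0 => hj (Fin.ext h0)
    have h1 : 0 < a ⟨0, hN0⟩ := hpos' _ (by simp [hk1'])
    have h2 : a j < 0 := hneg j (by omega)
    exact mul_neg_of_pos_of_neg h1 h2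
  have hk2' : k + 2 ≤ N := by
    by_contra h
    have hk1' : k = N - 1 := by omega
    refine hopp ⟨N - 1, by omega⟩ ?_
    intro j hj
    have hj0 : (j:ℕ) ≠ N - 1 := fun h0 => hj (Fin.ext h0)
    have h1 : a ⟨N - 1, by omega⟩ < 0 := hneg _ (by simp [hk1'])
    have h2 : 0 < a j := hpos' j (by omega)
    exact mul_neg_of_neg_of_pos h1 h2
  -- squares are less than c
  have hsq : ∀ i : Fin N, a i * a i < c := by
    intro i
    obtain ⟨i', hi'ne, hsign⟩ : ∃ i' : Fin N, i' ≠ i ∧ 0 < a i' * a i := by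
      rcases lt_or_ge (i:ℕ) k with h | h
      · by_cases h0 : (i:ℕ) = 0
        · refine ⟨⟨1, by omega⟩, fun hcon => by simp [Fin.ext_iff, h0] at hcon, ?_⟩
          exact mul_pos (hpos' _ (show (1:ℕ) < k by omega)) (hpos' i h)
        · refine ⟨⟨0, by omega⟩, fun hcon => by simp [Fin.ext_iff] at hcon; omega, ?_⟩
          exact mul_pos (hpos' _ (show (0:ℕ) < k by omega)) (hpos' i h)
      · by_cases h0 : (i:ℕ) = N - 1
        · refine ⟨⟨N - 2, by omega⟩, fun hcon => by simp [Fin.ext_iff, h0] at hcon; omega, ?_⟩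
          exact mul_pos_of_neg_of_neg (hneg _ (show k ≤ N - 2 by omega)) (hneg i h)
        · refine ⟨⟨N - 1, by omega⟩, fun hcon => by simp [Fin.ext_iff] at hcon; omega, ?_⟩
          exact mul_pos_of_neg_of_neg (hneg _ (show k ≤ N - 1 by omega)) (hneg i h)
    have hd : 0 < c - a i' * a i := hpos i' i hi'ne
    have hterm : (a i) ^ 2 / (c - a i' * a i) ≤ 1 := by
      have hle : (a i) ^ 2 / (c - a i' * a i)
          ≤ ∑ j ∈ univ.erase i', (a j) ^ 2 / (c - a i' * a j) := by
        apply Finset.single_le_sum (f := fun j => (a j) ^ 2 / (c - a i' * a j))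
        · intro j hj
          have hdj := hpos i' j (Ne.symm (mem_erase.mp hj).1)
          positivity
        · exact mem_erase.mpr ⟨hi'ne.symm, mem_univ i⟩
      rw [hC i'] at hle
      exact hle
    have h1 : (a i) ^ 2 ≤ c - a i' * a i := by rwa [div_le_one hd] at hterm
    nlinarith
  have hdall : ∀ p j : Fin N, 0 < c - a p * a j := by
    intro p j
    rcases eq_or_ne p j with h | h
    · rw [h]; linarith [hsq j]
    · exact hpos p j h
  -- F values
  have hF : ∀ i : Fin N, ∑ j, (c - (a j) ^ 2) / (c - a i * a j) = (N:ℝ) - 1 := by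
    intro i
    rw [← Finset.sum_erase_add _ _ (mem_univ i)]
    have hdiag : (c - (a i) ^ 2) / (c - a i * a i) = 1 := by
      have hne : c - a i * a i ≠ 0 := ne_of_gt (hdall i i)
      rw [div_eq_one_iff_eq hne]; ring
    have hrest : ∑ j ∈ univ.erase i, (c - (a j) ^ 2) / (c - a i * a j) = (N:ℝ) - 2 := by
      have hpt : ∀ j ∈ univ.erase i, (c - (a j) ^ 2) / (c - a i * a j)
          = c * (1 / (c - a i * a j)) - (a j) ^ 2 / (c - a i * a j) := by
        intro j hj
        rw [mul_one_div, ← sub_div]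
      rw [Finset.sum_congr rfl hpt, Finset.sum_sub_distrib, ← Finset.mul_sum, hid i, hC i]
      linarith
    rw [hrest, hdiag]
    ring
  -- three distinct values are impossible
  have key : ∀ p q r : Fin N, a p < a q → a q < a r → False := by
    intro p q r hpq hqr
    have hzx : 0 < a r - a p := by linarith
    have ht0 : 0 < (a r - a q) / (a r - a p) := div_pos (by linarith) hzx
    have ht1 : (a r - a q) / (a r - a p) < 1 := (div_lt_one hzx).mpr (by linarith)
    have hterm : ∀ j ∈ (univ : Finset (Fin N)),
        (c - (a j) ^ 2) / (c - a q * a j)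
          < ((a r - a q) / (a r - a p)) * ((c - (a j) ^ 2) / (c - a p * a j))
            + (1 - (a r - a q) / (a r - a p)) * ((c - (a j) ^ 2) / (c - a r * a j)) := by
      intro j _
      have hu : 0 < c - a p * a j := hdall p j
      have hv : 0 < c - a r * a j := hdall r j
      have huv : c - a p * a j ≠ c - a r * a j := by
        intro hcon
        have h1 : (a r - a p) * a j = 0 := by linarith
        rcases mul_eq_zero.mp h1 with h | h
        · linarith
        · exact hane j h
      have hmid : c - a q * a j = ((a r - a q) / (a r - a p)) * (c - a p * a j)
          + (1 - (a r - a q) / (a r - a p)) * (c - a r * a j) := by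
        have hzx' : a r - a p ≠ 0 := ne_of_gt hzx
        field_simp
        ring
      have hcs : 0 < c - (a j) ^ 2 := by have := hsq j; nlinarith
      calc (c - (a j) ^ 2) / (c - a q * a j)
          = (c - (a j) ^ 2) * (c - a q * a j)⁻¹ := div_eq_mul_inv _ _
        _ < (c - (a j) ^ 2) * (((a r - a q) / (a r - a p)) * (c - a p * a j)⁻¹
              + (1 - (a r - a q) / (a r - a p)) * (c - a r * a j)⁻¹) := by
            apply mul_lt_mul_of_pos_left _ hcs
            rw [hmid]
            exact inv_combo_lt hu hv huv ht0 ht1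
        _ = ((a r - a q) / (a r - a p)) * ((c - (a j) ^ 2) / (c - a p * a j))
            + (1 - (a r - a q) / (a r - a p)) * ((c - (a j) ^ 2) / (c - a r * a j)) := by
            ring
    have hne' : (univ : Finset (Fin N)).Nonempty := ⟨p, mem_univ p⟩
    have hlt := Finset.sum_lt_sum_of_nonempty hne' hterm
    rw [hF q, Finset.sum_add_distrib, ← Finset.mul_sum, ← Finset.mul_sum, hF p, hF r] at hlt
    linarith
  -- assemble the conclusion
  have i0 : Fin N := ⟨0, hN0⟩
  constructor
  · intro i j hi hj
    have htop : a (⟨0, hN0⟩ : Fin N) = a (⟨k - 1, by omega⟩ : Fin N) := by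
      by_contra hne
      have hle : a (⟨k - 1, by omega⟩ : Fin N) ≤ a (⟨0, hN0⟩ : Fin N) :=
        hanti (by simp [Fin.le_def])
      have hlt : a (⟨k - 1, by omega⟩ : Fin N) < a (⟨0, hN0⟩ : Fin N) :=
        lt_of_le_of_ne hle (fun h => hne h.symm)
      have h1 : a (⟨N - 1, by omega⟩ : Fin N) < a (⟨k - 1, by omega⟩ : Fin N) := by
        have := hneg (⟨N - 1, by omega⟩ : Fin N) (by simp; omega)
        have := hpos' (⟨k - 1, by omega⟩ : Fin N) (by simp; omega)
        linarith
      exact key _ _ _ h1 hlt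
    have hsq1 : ∀ m : Fin N, (m:ℕ) < k → a m = a (⟨0, hN0⟩ : Fin N) := by
      intro m hm
      have h1 : a m ≤ a (⟨0, hN0⟩ : Fin N) := hanti (by simp [Fin.le_def])
      have h2 : a (⟨k - 1, by omega⟩ : Fin N) ≤ a m := hanti (by simp [Fin.le_def]; omega)
      rw [← htop] at h2
      linarith
    rw [hsq1 i hi, hsq1 j hj]
  · intro i j hi hj
    have hbot : a (⟨k, hkN⟩ : Fin N) = a (⟨N - 1, by omega⟩ : Fin N) := by
      by_contra hne
      have hle : a (⟨N - 1, by omega⟩ : Fin N) ≤ a (⟨k, hkN⟩ : Fin N) :=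
        hanti (by simp [Fin.le_def]; omega)
      have hlt : a (⟨N - 1, by omega⟩ : Fin N) < a (⟨k, hkN⟩ : Fin N) :=
        lt_of_le_of_ne hle (fun h => hne h.symm)
      have h2 : a (⟨k, hkN⟩ : Fin N) < a (⟨0, hN0⟩ : Fin N) := by
        have := hneg (⟨k, hkN⟩ : Fin N) (by simp)
        have := hpos' (⟨0, hN0⟩ : Fin N) (by simp; omega)
        linarith
      exact key _ _ _ hlt h2
    have hsq2 : ∀ m : Fin N, k ≤ (m:ℕ) → a m = a (⟨k, hkN⟩ : Fin N) := by
      intro m hm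
      have h1 : a m ≤ a (⟨k, hkN⟩ : Fin N) := hanti (by simp [Fin.le_def]; omega)
      have h2 : a (⟨N - 1, by omega⟩ : Fin N) ≤ a m := hanti (by simp [Fin.le_def]; omega)
      rw [← hbot] at h2
      linarith
    rw [hsq2 i hi, hsq2 j hj]
end

section
/- Let k, m ≥ 1 and define f(t) := (k(k+1)/2) log(1/(1 + 1/(k+m) + m t)) + (k(k-1)/2) log((k/(k-1))/(1 - 1/(k+m) - m t)) + (m(m+1)/2) log(1/(1 + 1/(k+m) - k t)) + (m(m-1)/2) log((m/(m-1))/(1 - 1/(k+m) + k t)) + k m log(1/(1 - (1/(k+m) + m t)(1/(k+m) - k t))) on the interval (-1/(m(k+m)), 1/(k(k+m))). Then f'(t) has the same sign as t(m t + 1/(k+m))(k t - 1/(k+m)); in particular f is strictly increasing on (-1/(m(k+m)), 0) and strictly decreasing on (0, 1/(k(k+m))), so f has a strict local maximum at t = 0. -/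
set_option maxHeartbeats 1000000

lemma aux_log (c2 c e d t : ℝ) (h : c2 = 0 ∨ (c ≠ 0 ∧ e + d * t ≠ 0)) :
    HasDerivAt (fun x => c2 * Real.log (c / (e + d * x))) (c2 * (-d / (e + d * t))) t := by
  rcases h with h | ⟨hc, he⟩
  · rw [h]; simp only [zero_mul]; exact hasDerivAt_const t 0
  · have h1 : HasDerivAt (fun x : ℝ => e + d * x) d t := by
      simpa using ((hasDerivAt_id t).const_mul d).const_add e
    have h2 := (h1.inv he).const_mul c
    have h3 : HasDerivAt (fun x => c / (e + d * x)) (c * (-d / (e + d * t) ^ 2)) t := by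
      simpa [div_eq_mul_inv] using h2
    have h4 := (h3.log (div_ne_zero hc he)).const_mul c2
    refine h4.congr_deriv ?_
    field_simp

lemma aux_id (K M x a : ℝ)
    (hAne : (1 + a + M*x) ≠ 0) (hBne : (1 - a - M*x) ≠ 0)
    (hCne : (1 + a - K*x) ≠ 0) (hDne : (1 - a + K*x) ≠ 0)
    (hEne : (1 - (a + M*x) * (a - K*x)) ≠ 0) :
    (K * (K + 1) / 2 * (-M / (1 + a + M * x)) + K * (K - 1) / 2 * (M / (1 - a - M * x)) +
            M * (M + 1) / 2 * (K / (1 + a - K * x)) +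
          M * (M - 1) / 2 * (-K / (1 - a + K * x)) +
        K * M *
          -(-(M * (a - K * x) + (a + M * x) * -K) /
              (1 - (a + M * x) * (a - K * x)))) =
      K * M * (K + M) * (K * (a + M*x)^2 + M * (a - K*x)^2 - (K + M) * ((a + M*x)*(a - K*x))^2
          - ((a + M*x) + (a - K*x)) * (1 - (a + M*x)*(a - K*x))) /
        ((1 + (a + M * x)) * (1 - (a + M * x)) * ((1 + (a - K * x)) * (1 - (a - K * x))) * (1 - (a + M * x) * (a - K * x))) * x := by
  conv_rhs => rw [div_mul_eq_mul_div]
  rw [eq_div_iff (by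
    exact mul_ne_zero (mul_ne_zero (mul_ne_zero (fun h => hAne (by linarith)) (fun h => hBne (by linarith)))
      (mul_ne_zero (fun h => hCne (by linarith)) (fun h => hDne (by linarith)))) hEne)]
  generalize hEg : 1 - (a + M * x) * (a - K * x) = E at hEne ⊢
  field_simp
  subst hEg
  ring

theorem stmt_15 (k m : ℕ) (hk : 1 ≤ k) (hm : 1 ≤ m) (f : ℝ → ℝ)
    (hf : ∀ t : ℝ, f t =
      ((k : ℝ) * (k + 1) / 2) * Real.log (1 / (1 + 1 / ((k : ℝ) + m) + m * t)) +
      ((k : ℝ) * (k - 1) / 2) * Real.log (((k : ℝ) / ((k : ℝ) - 1)) / (1 - 1 / ((k : ℝ) + m) - m * t)) +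
      ((m : ℝ) * (m + 1) / 2) * Real.log (1 / (1 + 1 / ((k : ℝ) + m) - k * t)) +
      ((m : ℝ) * (m - 1) / 2) * Real.log (((m : ℝ) / ((m : ℝ) - 1)) / (1 - 1 / ((k : ℝ) + m) + k * t)) +
      (k : ℝ) * m * Real.log (1 / (1 - (1 / ((k : ℝ) + m) + m * t) * (1 / ((k : ℝ) + m) - k * t)))) :
    (∀ t ∈ Set.Ioo (-(1 / ((m : ℝ) * (k + m)))) (1 / ((k : ℝ) * (k + m))),
      Real.sign (deriv f t) =
        Real.sign (t * ((m : ℝ) * t + 1 / ((k : ℝ) + m)) * ((k : ℝ) * t - 1 / ((k : ℝ) + m)))) ∧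
    StrictMonoOn f (Set.Ioc (-(1 / ((m : ℝ) * (k + m)))) 0) ∧
    StrictAntiOn f (Set.Ico (0 : ℝ) (1 / ((k : ℝ) * (k + m)))) ∧
    (∀ t ∈ Set.Ioo (-(1 / ((m : ℝ) * (k + m)))) (1 / ((k : ℝ) * (k + m))),
      t ≠ 0 → f t < f 0) := by
  have hK : (1:ℝ) ≤ (k:ℝ) := by exact_mod_cast hk
  have hM : (1:ℝ) ≤ (m:ℝ) := by exact_mod_cast hm
  set K := (k:ℝ) with hKdef
  set M := (m:ℝ) with hMdef
  clear_value K M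
  have hK0 : (0:ℝ) < K := lt_of_lt_of_le one_pos hK
  have hM0 : (0:ℝ) < M := lt_of_lt_of_le one_pos hM
  have hs : (0:ℝ) < K + M := by linarith
  have hsne : K + M ≠ 0 := ne_of_gt hs
  -- basic facts on the interval
  have hfacts : ∀ x ∈ Set.Ioo (-(1 / (M * (K + M)))) (1 / (K * (K + M))),
      0 < 1 / (K + M) + M * x ∧ 0 < 1 / (K + M) - K * x ∧
      1 / (K + M) + M * x < 1 ∧ 1 / (K + M) - K * x < 1 ∧
      K * (1 / (K + M) + M * x) + M * (1 / (K + M) - K * x) = 1 := by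
    intro x hx
    obtain ⟨hx1, hx2⟩ := hx
    have e1 : M * -(1 / (M * (K + M))) = -(1 / (K + M)) := by field_simp
    have e2 : K * (1 / (K * (K + M))) = 1 / (K + M) := by field_simp
    have h1 : M * -(1 / (M * (K + M))) < M * x := (mul_lt_mul_iff_right₀ hM0).mpr hx1
    have h2 : K * x < K * (1 / (K * (K + M))) := (mul_lt_mul_iff_right₀ hK0).mpr hx2
    have hu : 0 < 1 / (K + M) + M * x := by rw [e1] at h1; linarith
    have hv : 0 < 1 / (K + M) - K * x := by rw [e2] at h2; linarith
    have hKuMv : K * (1 / (K + M) + M * x) + M * (1 / (K + M) - K * x) = 1 := by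
      field_simp; ring
    have hu1 : 1 / (K + M) + M * x < 1 := by
      nlinarith [mul_nonneg (sub_nonneg.2 hK) hu.le, mul_pos hM0 hv]
    have hv1 : 1 / (K + M) - K * x < 1 := by
      nlinarith [mul_nonneg (sub_nonneg.2 hM) hv.le, mul_pos hK0 hu]
    exact ⟨hu, hv, hu1, hv1, hKuMv⟩
  -- derivative
  have hder : ∀ x ∈ Set.Ioo (-(1 / (M * (K + M)))) (1 / (K * (K + M))),
      HasDerivAt f
        ((K * (K + 1) / 2) * (-M / (1 + 1 / (K + M) + M * x)) +
         (K * (K - 1) / 2) * (M / (1 - 1 / (K + M) - M * x)) +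
         (M * (M + 1) / 2) * (K / (1 + 1 / (K + M) - K * x)) +
         (M * (M - 1) / 2) * (-K / (1 - 1 / (K + M) + K * x)) +
         K * M * -(-(M * (1 / (K + M) - K * x) + (1 / (K + M) + M * x) * -K) /
            (1 - (1 / (K + M) + M * x) * (1 / (K + M) - K * x)))) x := by
    intro x hx
    obtain ⟨hu, hv, hu1, hv1, hKuMv⟩ := hfacts x hx
    have hA : (0:ℝ) < 1 + 1 / (K + M) + M * x := by linarith
    have hB : (0:ℝ) < 1 - 1 / (K + M) - M * x := by linarith
    have hC : (0:ℝ) < 1 + 1 / (K + M) - K * x := by linarith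
    have hD : (0:ℝ) < 1 - 1 / (K + M) + K * x := by linarith
    have huv : (1 / (K + M) + M * x) * (1 / (K + M) - K * x) < 1 := by
      have h3 := mul_lt_mul_of_pos_left hv1 hu
      rw [mul_one] at h3
      linarith
    have hE : (0:ℝ) < 1 - (1 / (K + M) + M * x) * (1 / (K + M) - K * x) := by linarith
    have h1 : HasDerivAt (fun y => (K * (K + 1) / 2) * Real.log (1 / (1 + 1 / (K + M) + M * y)))
        ((K * (K + 1) / 2) * (-M / (1 + 1 / (K + M) + M * x))) x :=
      aux_log _ 1 (1 + 1 / (K + M)) M x (Or.inr ⟨one_ne_zero, ne_of_gt hA⟩)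
    have h2 : HasDerivAt (fun y => (K * (K - 1) / 2) * Real.log ((K / (K - 1)) / (1 - 1 / (K + M) - M * y)))
        ((K * (K - 1) / 2) * (M / (1 - 1 / (K + M) - M * x))) x := by
      have hor : K * (K - 1) / 2 = 0 ∨ (K / (K - 1) ≠ 0 ∧ (1 - 1 / (K + M)) + -M * x ≠ 0) := by
        rcases eq_or_lt_of_le hK with h | h
        · exact Or.inl (by rw [← h]; ring)
        · exact Or.inr ⟨ne_of_gt (div_pos (by linarith) (by linarith)),
            ne_of_gt (by linarith : (0:ℝ) < (1 - 1 / (K + M)) + -M * x)⟩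
      have := aux_log (K * (K - 1) / 2) (K / (K - 1)) (1 - 1 / (K + M)) (-M) x hor
      simpa only [neg_mul, ← sub_eq_add_neg, neg_neg] using this
    have h3 : HasDerivAt (fun y => (M * (M + 1) / 2) * Real.log (1 / (1 + 1 / (K + M) - K * y)))
        ((M * (M + 1) / 2) * (K / (1 + 1 / (K + M) - K * x))) x := by
      have := aux_log (M * (M + 1) / 2) 1 (1 + 1 / (K + M)) (-K) x
        (Or.inr ⟨one_ne_zero, ne_of_gt (by linarith : (0:ℝ) < (1 + 1 / (K + M)) + -K * x)⟩)
      simpa only [neg_mul, ← sub_eq_add_neg, neg_neg] using this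
    have h4 : HasDerivAt (fun y => (M * (M - 1) / 2) * Real.log ((M / (M - 1)) / (1 - 1 / (K + M) + K * y)))
        ((M * (M - 1) / 2) * (-K / (1 - 1 / (K + M) + K * x))) x := by
      have hor : M * (M - 1) / 2 = 0 ∨ (M / (M - 1) ≠ 0 ∧ (1 - 1 / (K + M)) + K * x ≠ 0) := by
        rcases eq_or_lt_of_le hM with h | h
        · exact Or.inl (by rw [← h]; ring)
        · exact Or.inr ⟨ne_of_gt (div_pos (by linarith) (by linarith)), ne_of_gt (by linarith)⟩
      exact aux_log _ _ _ _ _ hor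
    have hu' : HasDerivAt (fun y => 1 / (K + M) + M * y) M x := by
      simpa using ((hasDerivAt_id x).const_mul M).const_add (1 / (K + M))
    have hv' : HasDerivAt (fun y => 1 / (K + M) - K * y) (-K) x := by
      simpa using ((hasDerivAt_id x).const_mul K).const_sub (1 / (K + M))
    have hE' : HasDerivAt (fun y => 1 - (1 / (K + M) + M * y) * (1 / (K + M) - K * y))
        (-(M * (1 / (K + M) - K * x) + (1 / (K + M) + M * x) * -K)) x :=
      (hu'.mul hv').const_sub 1
    have h5 : HasDerivAt (fun y => K * M * Real.log (1 / (1 - (1 / (K + M) + M * y) * (1 / (K + M) - K * y))))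
        (K * M * -(-(M * (1 / (K + M) - K * x) + (1 / (K + M) + M * x) * -K) /
          (1 - (1 / (K + M) + M * x) * (1 / (K + M) - K * x)))) x := by
      have hEne : (1 - (1 / (K + M) + M * x) * (1 / (K + M) - K * x)) ≠ 0 := ne_of_gt hE
      simp only [one_div] at hE' hEne ⊢
      simp only [Real.log_inv]
      exact ((hE'.log hEne).neg).const_mul (K * M)
    exact ((((h1.add h2).add h3).add h4).add h5).congr_of_eventuallyEq
      (Filter.Eventually.of_forall fun y => hf y)
  -- key: derivative is c * x with c < 0
  have key : ∀ x ∈ Set.Ioo (-(1 / (M * (K + M)))) (1 / (K * (K + M))),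
      ∃ c : ℝ, c < 0 ∧ deriv f x = c * x := by
    intro x hx
    obtain ⟨hu, hv, hu1, hv1, hKuMv⟩ := hfacts x hx
    have hA : (0:ℝ) < 1 + 1 / (K + M) + M * x := by linarith
    have hB : (0:ℝ) < 1 - 1 / (K + M) - M * x := by linarith
    have hC : (0:ℝ) < 1 + 1 / (K + M) - K * x := by linarith
    have hD : (0:ℝ) < 1 - 1 / (K + M) + K * x := by linarith
    have huv : (1 / (K + M) + M * x) * (1 / (K + M) - K * x) < 1 := by
      have h3 := mul_lt_mul_of_pos_left hv1 hu
      rw [mul_one] at h3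
      linarith
    have hE : (0:ℝ) < 1 - (1 / (K + M) + M * x) * (1 / (K + M) - K * x) := by linarith
    set u := 1 / (K + M) + M * x with hudef
    set v := 1 / (K + M) - K * x with hvdef
    refine ⟨K * M * (K + M) * (K * u ^ 2 + M * v ^ 2 - (K + M) * (u * v) ^ 2
        - (u + v) * (1 - u * v)) /
        ((1 + u) * (1 - u) * ((1 + v) * (1 - v)) * (1 - u * v)), ?_, ?_⟩
    · apply div_neg_of_neg_of_pos
      · have hW : (u + v) - (K + M) * (1 + u * v) < 0 := by
          nlinarith [mul_nonneg (sub_nonneg.2 hK) hu.le, mul_nonneg (sub_nonneg.2 hM) hv.le,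
            mul_pos hs (mul_pos hu hv)]
        have hfac : K * u ^ 2 + M * v ^ 2 - (K + M) * (u * v) ^ 2 - (u + v) * (1 - u * v)
            = u * v * ((u + v) - (K + M) * (1 + u * v)) := by
          linear_combination (u + v) * hKuMv
        have hR : K * u ^ 2 + M * v ^ 2 - (K + M) * (u * v) ^ 2 - (u + v) * (1 - u * v) < 0 := by
          rw [hfac]; exact mul_neg_of_pos_of_neg (mul_pos hu hv) hW
        exact mul_neg_of_pos_of_neg (by positivity) hR
      · exact mul_pos (mul_pos (mul_pos (by linarith) (by linarith))
          (mul_pos (by linarith) (by linarith))) hE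
    · rw [(hder x hx).deriv]
      simp only [hudef, hvdef]
      exact aux_id K M x (1 / (K + M)) (ne_of_gt hA) (ne_of_gt hB) (ne_of_gt hC) (ne_of_gt hD)
        (ne_of_gt hE)
  have hl0 : -(1 / (M * (K + M))) < 0 := by
    have : (0:ℝ) < 1 / (M * (K + M)) := by positivity
    linarith
  have hr0 : (0:ℝ) < 1 / (K * (K + M)) := by positivity
  have hmono : StrictMonoOn f (Set.Ioc (-(1 / (M * (K + M)))) 0) := by
    apply strictMonoOn_of_deriv_pos (convex_Ioc _ _)
    · intro x hx
      exact (hder x ⟨hx.1, lt_of_le_of_lt hx.2 hr0⟩).differentiableAt.continuousAt.continuousWithinAt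
    · intro x hx
      rw [interior_Ioc] at hx
      obtain ⟨c, hc, hcx⟩ := key x ⟨hx.1, hx.2.trans hr0⟩
      rw [hcx]
      exact mul_pos_of_neg_of_neg hc hx.2
  have hanti : StrictAntiOn f (Set.Ico 0 (1 / (K * (K + M)))) := by
    apply strictAntiOn_of_deriv_neg (convex_Ico _ _)
    · intro x hx
      exact (hder x ⟨lt_of_lt_of_le hl0 hx.1, hx.2⟩).differentiableAt.continuousAt.continuousWithinAt
    · intro x hx
      rw [interior_Ico] at hx
      obtain ⟨c, hc, hcx⟩ := key x ⟨hl0.trans hx.1, hx.2⟩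
      rw [hcx]
      exact mul_neg_of_neg_of_pos hc hx.1
  refine ⟨?_, hmono, hanti, ?_⟩
  · intro t ht
    obtain ⟨c, hc, hct⟩ := key t ht
    obtain ⟨hu, hv, _, _, _⟩ := hfacts t ht
    have hcub : t * (M * t + 1 / (K + M)) * (K * t - 1 / (K + M)) =
        (-((1 / (K + M) + M * t) * (1 / (K + M) - K * t))) * t := by ring
    have hc' : -((1 / (K + M) + M * t) * (1 / (K + M) - K * t)) < 0 :=
      neg_lt_zero.2 (mul_pos hu hv)
    rw [hct, hcub]
    rcases lt_trichotomy t 0 with h | h | h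
    · rw [Real.sign_of_pos (mul_pos_of_neg_of_neg hc h),
        Real.sign_of_pos (mul_pos_of_neg_of_neg hc' h)]
    · subst h; simp
    · rw [Real.sign_of_neg (mul_neg_of_neg_of_pos hc h),
        Real.sign_of_neg (mul_neg_of_neg_of_pos hc' h)]
  · intro t ht hne
    rcases hne.lt_or_gt with h | h
    · exact hmono ⟨ht.1, h.le⟩ ⟨hl0, le_refl 0⟩ h
    · exact hanti ⟨le_refl 0, hr0⟩ ⟨h.le, ht.2⟩ h
end

section
/- Let X be a finite set of N ≥ d+2 distinct unit vectors contained in a hyperplane {x ∈ ℝ^d : x_d = 0} through the origin, and let h : [-1,1] → ℝ be strictly convex. Assume there exist points x_1 = (r, s, 0,…,0), x_2 = (r, -s, 0,…,0) in X with s = √(1-r²) > 0, and some x_3 ∈ X whose second coordinate is nonzero. Then there is a configuration Y of N distinct unit vectors with E_h(Y) < E_h(X); in particular X is not a local minimum of E_h. -/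
open Finset RealInnerProductSpace

lemma eq_one_of_sq (t : ℝ) (h0 : 0 ≤ t) (h2 : t ^ 2 = 1) : t = 1 := by nlinarith

lemma key_lt (h : ℝ → ℝ) (hconv : StrictConvexOn ℝ (Set.Icc (-1:ℝ) 1) h)
    (u v : ℝ) (hu : u ∈ Set.Icc (-1:ℝ) 1) (hv : v ∈ Set.Icc (-1:ℝ) 1) (huv : u ≠ v) :
    h ((4/5)*u + (1/5)*v) + h ((1/5)*u + (4/5)*v) < h u + h v := by
  have h1 := hconv.2 hu hv huv (by norm_num : (0:ℝ) < 4/5) (by norm_num : (0:ℝ) < 1/5) (by norm_num)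
  have h2 := hconv.2 hu hv huv (by norm_num : (0:ℝ) < 1/5) (by norm_num : (0:ℝ) < 4/5) (by norm_num)
  simp only [smul_eq_mul] at h1 h2
  linarith

lemma inner3 {d : ℕ} (e0 e1 dl : Fin d) (h01 : e0 ≠ e1) (h0l : e0 ≠ dl) (h1l : e1 ≠ dl)
    (u w : EuclideanSpace ℝ (Fin d))
    (hu : ∀ j, j ≠ e0 → j ≠ e1 → j ≠ dl → u j = 0) :
    ⟪u, w⟫ = u e0 * w e0 + u e1 * w e1 + u dl * w dl := by
  rw [PiLp.inner_apply]
  simp only [RCLike.inner_apply, conj_trivial]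
  rw [← Finset.sum_subset (Finset.subset_univ ({e0, e1, dl} : Finset (Fin d)))]
  · rw [Finset.sum_insert (by simp [h01, h0l]), Finset.sum_insert (by simp [h1l]),
      Finset.sum_singleton]
    ring
  · intro j _ hj
    simp only [Finset.mem_insert, Finset.mem_singleton, not_or] at hj
    rw [hu j hj.1 hj.2.1 hj.2.2, mul_zero]

lemma decomp {N : ℕ} (i₁ i₂ : Fin N) (h12 : i₁ ≠ i₂) (F : Fin N → Fin N → ℝ) :
    ∑ i, ∑ j ∈ univ.erase i, F i j =
      F i₁ i₂ + F i₂ i₁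
      + (∑ k ∈ (univ.erase i₁).erase i₂, (F i₁ k + F k i₁ + F i₂ k + F k i₂))
      + ∑ k ∈ (univ.erase i₁).erase i₂, ∑ j ∈ ((univ.erase i₁).erase i₂).erase k, F k j := by
  set T := (univ.erase i₁).erase i₂ with hT
  have hi2T : i₂ ∉ T := Finset.notMem_erase _ _
  have hi1T : i₁ ∉ T := by
    intro hmem; exact Finset.notMem_erase i₁ univ (Finset.mem_of_mem_erase hmem)
  have hu1 : univ.erase i₁ = insert i₂ T := by
    rw [hT, Finset.insert_erase (Finset.mem_erase.2 ⟨h12.symm, Finset.mem_univ _⟩)]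
  have hu2 : univ.erase i₂ = insert i₁ T := by
    rw [hT, Finset.erase_right_comm, Finset.insert_erase
      (Finset.mem_erase.2 ⟨h12, Finset.mem_univ _⟩)]
  have huniv : (univ : Finset (Fin N)) = insert i₁ (insert i₂ T) := by
    rw [← hu1, Finset.insert_erase (Finset.mem_univ _)]
  have hinner : ∀ k ∈ T, ∑ j ∈ univ.erase k, F k j
      = F k i₁ + (F k i₂ + ∑ j ∈ T.erase k, F k j) := by
    intro k hk
    have hk1 : k ≠ i₁ := by rintro rfl; exact hi1T hk
    have hk2 : k ≠ i₂ := by rintro rfl; exact hi2T hk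
    have h1 : T.erase k = ((univ.erase k).erase i₁).erase i₂ := by
      rw [hT, Finset.erase_right_comm (a := i₂) (b := k),
        Finset.erase_right_comm (a := i₁) (b := k)]
    have h2 : insert i₂ (T.erase k) = (univ.erase k).erase i₁ := by
      rw [h1, Finset.insert_erase (Finset.mem_erase.2
        ⟨h12.symm, Finset.mem_erase.2 ⟨hk2.symm, Finset.mem_univ _⟩⟩)]
    have h3 : insert i₁ (insert i₂ (T.erase k)) = univ.erase k := by
      rw [h2, Finset.insert_erase (Finset.mem_erase.2 ⟨hk1.symm, Finset.mem_univ _⟩)]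
    rw [← h3, Finset.sum_insert, Finset.sum_insert]
    · exact fun hmem => hi2T (Finset.mem_of_mem_erase hmem)
    · intro hmem
      rcases Finset.mem_insert.1 hmem with h' | h'
      · exact h12 h'
      · exact hi1T (Finset.mem_of_mem_erase h')
  have main : ∀ (G : Fin N → ℝ), ∑ i, G i = G i₁ + G i₂ + ∑ k ∈ T, G k := by
    intro G
    rw [huniv, Finset.sum_insert (by simp [hi1T, h12]), Finset.sum_insert hi2T]
    ring
  rw [main (fun i => ∑ j ∈ univ.erase i, F i j)]
  rw [hu1, hu2, Finset.sum_insert hi2T, Finset.sum_insert hi1T,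
    Finset.sum_congr rfl hinner]
  simp only [Finset.sum_add_distrib]
  ring

noncomputable def pert {d : ℕ} (e0 e1 dl : Fin d) (a b c : ℝ) :
    EuclideanSpace ℝ (Fin d) :=
  WithLp.toLp 2 (fun j => if j = e0 then a else if j = e1 then b else if j = dl then c else 0)

lemma pert_e0 {d : ℕ} (e0 e1 dl : Fin d) (a b c : ℝ) : pert e0 e1 dl a b c e0 = a :=
  if_pos rfl

lemma pert_e1 {d : ℕ} {e0 e1 : Fin d} (dl : Fin d) (h : e0 ≠ e1) (a b c : ℝ) :
    pert e0 e1 dl a b c e1 = b := by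
  simp [pert, h.symm]

lemma pert_dl {d : ℕ} {e0 e1 dl : Fin d} (h0 : e0 ≠ dl) (h1 : e1 ≠ dl) (a b c : ℝ) :
    pert e0 e1 dl a b c dl = c := by
  simp [pert, h0.symm, h1.symm]

lemma pert_zero {d : ℕ} (e0 e1 dl : Fin d) (a b c : ℝ) :
    ∀ j, j ≠ e0 → j ≠ e1 → j ≠ dl → pert e0 e1 dl a b c j = 0 := by
  intro j h0 h1 hl
  simp [pert, h0, h1, hl]

set_option maxHeartbeats 1000000 in
theorem stmt_16 (d N : ℕ) (hd : 3 ≤ d) (hN : d + 2 ≤ N)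
    (x : Fin N → EuclideanSpace ℝ (Fin d))
    (hunit : ∀ i, ‖x i‖ = 1) (hinj : Function.Injective x)
    (hplane : ∀ i, x i ⟨d - 1, by omega⟩ = 0)
    (h : ℝ → ℝ) (hconv : StrictConvexOn ℝ (Set.Icc (-1 : ℝ) 1) h)
    (i₁ i₂ i₃ : Fin N) (h12 : i₁ ≠ i₂) (h13 : i₁ ≠ i₃) (h23 : i₂ ≠ i₃)
    (r s : ℝ) (hs : s = Real.sqrt (1 - r ^ 2)) (hs0 : 0 < s)
    (hx1 : x i₁ ⟨0, by omega⟩ = r ∧ x i₁ ⟨1, by omega⟩ = s ∧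
      ∀ j : Fin d, 2 ≤ (j : ℕ) → x i₁ j = 0)
    (hx2 : x i₂ ⟨0, by omega⟩ = r ∧ x i₂ ⟨1, by omega⟩ = -s ∧
      ∀ j : Fin d, 2 ≤ (j : ℕ) → x i₂ j = 0)
    (hx3 : x i₃ ⟨1, by omega⟩ ≠ 0) :
    ∃ y : Fin N → EuclideanSpace ℝ (Fin d),
      Function.Injective y ∧ (∀ i, ‖y i‖ = 1) ∧
      ∑ i, ∑ j ∈ univ.erase i, h ⟪y i, y j⟫ <
        ∑ i, ∑ j ∈ univ.erase i, h ⟪x i, x j⟫ := by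
  classical
  set e0 : Fin d := ⟨0, by omega⟩ with he0
  set e1 : Fin d := ⟨1, by omega⟩ with he1
  set dl : Fin d := ⟨d - 1, by omega⟩ with hdl
  have ne01 : e0 ≠ e1 := by simp [he0, he1, Fin.ext_iff]
  have ne0l : e0 ≠ dl := by simp [he0, hdl, Fin.ext_iff]; omega
  have ne1l : e1 ≠ dl := by simp [he1, hdl, Fin.ext_iff]; omega
  -- basic algebra
  have hr2 : 0 ≤ 1 - r ^ 2 := by
    by_contra hc
    push_neg at hc
    rw [hs, Real.sqrt_eq_zero_of_nonpos (le_of_lt hc)] at hs0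
    exact lt_irrefl 0 hs0
  have hs2 : s ^ 2 = 1 - r ^ 2 := by rw [hs]; exact Real.sq_sqrt hr2
  -- zero-coordinate facts
  have hz1 : ∀ j, j ≠ e0 → j ≠ e1 → j ≠ dl → x i₁ j = 0 := by
    intro j h0 h1 _
    refine hx1.2.2 j ?_
    have h0' : (j : ℕ) ≠ 0 := fun hh => h0 (Fin.ext hh)
    have h1' : (j : ℕ) ≠ 1 := fun hh => h1 (Fin.ext hh)
    omega
  have hz2 : ∀ j, j ≠ e0 → j ≠ e1 → j ≠ dl → x i₂ j = 0 := by
    intro j h0 h1 _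
    refine hx2.2.2 j ?_
    have h0' : (j : ℕ) ≠ 0 := fun hh => h0 (Fin.ext hh)
    have h1' : (j : ℕ) ≠ 1 := fun hh => h1 (Fin.ext hh)
    omega
  have hx1l : x i₁ dl = 0 := hx1.2.2 dl (by simp [hdl]; omega)
  have hx2l : x i₂ dl = 0 := hx2.2.2 dl (by simp [hdl]; omega)
  -- the perturbed vectors
  set u : EuclideanSpace ℝ (Fin d) := pert e0 e1 dl r (3/5*s) (4/5*s) with hu
  set v : EuclideanSpace ℝ (Fin d) := pert e0 e1 dl r (-(3/5*s)) (-(4/5*s)) with hv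
  have hue0 : u e0 = r := pert_e0 _ _ _ _ _ _
  have hue1 : u e1 = 3/5*s := pert_e1 _ ne01 _ _ _
  have huel : u dl = 4/5*s := pert_dl ne0l ne1l _ _ _
  have hve0 : v e0 = r := pert_e0 _ _ _ _ _ _
  have hve1 : v e1 = -(3/5*s) := pert_e1 _ ne01 _ _ _
  have hvel : v dl = -(4/5*s) := pert_dl ne0l ne1l _ _ _
  have hzu := pert_zero e0 e1 dl r (3/5*s) (4/5*s)
  have hzv := pert_zero e0 e1 dl r (-(3/5*s)) (-(4/5*s))
  -- norms
  have hnu : ‖u‖ = 1 := by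
    have hi : ⟪u, u⟫ = 1 := by
      rw [inner3 e0 e1 dl ne01 ne0l ne1l u u hzu, hue0, hue1, huel]
      linear_combination hs2
    have h2 : ‖u‖ ^ 2 = 1 := by rw [← real_inner_self_eq_norm_sq, hi]
    exact eq_one_of_sq _ (norm_nonneg u) h2
  have hnv : ‖v‖ = 1 := by
    have hi : ⟪v, v⟫ = 1 := by
      rw [inner3 e0 e1 dl ne01 ne0l ne1l v v hzv, hve0, hve1, hvel]
      linear_combination hs2
    have h2 : ‖v‖ ^ 2 = 1 := by rw [← real_inner_self_eq_norm_sq, hi]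
    exact eq_one_of_sq _ (norm_nonneg v) h2
  -- define y
  set y : Fin N → EuclideanSpace ℝ (Fin d) :=
    fun i => if i = i₁ then u else if i = i₂ then v else x i with hy
  have hyi1 : y i₁ = u := by simp [hy]
  have hyi2 : y i₂ = v := by simp [hy, h12.symm]
  have hyk : ∀ k, k ≠ i₁ → k ≠ i₂ → y k = x k := by
    intro k hk1 hk2; simp [hy, hk1, hk2]
  -- distinctness
  have huv : u ≠ v := by
    intro heq
    have : u e1 = v e1 := by rw [heq]
    rw [hue1, hve1] at this
    linarith
  have hux : ∀ k, u ≠ x k := by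
    intro k heq
    have : u dl = x k dl := by rw [heq]
    rw [huel] at this
    rw [hplane k] at this
    linarith
  have hvx : ∀ k, v ≠ x k := by
    intro k heq
    have : v dl = x k dl := by rw [heq]
    rw [hvel] at this
    rw [hplane k] at this
    linarith
  have hyinj : Function.Injective y := by
    intro a b hab
    by_cases ha1 : a = i₁ <;> by_cases hb1 : b = i₁
    · rw [ha1, hb1]
    · exfalso
      subst ha1
      rw [hyi1] at hab
      by_cases hb2 : b = i₂
      · subst hb2; rw [hyi2] at hab; exact huv hab
      · rw [hyk b hb1 hb2] at hab; exact hux b hab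
    · exfalso
      subst hb1
      rw [hyi1] at hab
      by_cases ha2 : a = i₂
      · subst ha2; rw [hyi2] at hab; exact huv hab.symm
      · rw [hyk a ha1 ha2] at hab; exact hux a hab.symm
    · by_cases ha2 : a = i₂ <;> by_cases hb2 : b = i₂
      · rw [ha2, hb2]
      · exfalso
        subst ha2
        rw [hyi2, hyk b hb1 hb2] at hab
        exact hvx b hab
      · exfalso
        subst hb2
        rw [hyi2, hyk a ha1 ha2] at hab
        exact hvx a hab.symm
      · rw [hyk a ha1 ha2, hyk b hb1 hb2] at hab
        exact hinj hab
  have hynorm : ∀ i, ‖y i‖ = 1 := by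
    intro i
    by_cases hi1 : i = i₁
    · rw [hi1, hyi1]; exact hnu
    by_cases hi2 : i = i₂
    · rw [hi2, hyi2]; exact hnv
    rw [hyk i hi1 hi2]; exact hunit i
  refine ⟨y, hyinj, hynorm, ?_⟩
  -- energy comparison
  rw [decomp i₁ i₂ h12 (fun i j => h ⟪y i, y j⟫),
    decomp i₁ i₂ h12 (fun i j => h ⟪x i, x j⟫)]
  set T := (univ.erase i₁).erase i₂ with hT
  -- mutual term equal
  have hmut : ⟪y i₁, y i₂⟫ = ⟪x i₁, x i₂⟫ := by
    rw [hyi1, hyi2, inner3 e0 e1 dl ne01 ne0l ne1l u v hzu,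
      inner3 e0 e1 dl ne01 ne0l ne1l (x i₁) (x i₂) hz1,
      hue0, hue1, huel, hve0, hve1, hvel, hx1.1, hx1.2.1, hx1l,
      hx2.1, hx2.2.1, hx2l]
    ring
  have hmut' : ⟪y i₂, y i₁⟫ = ⟪x i₂, x i₁⟫ := by
    rw [real_inner_comm, hmut, real_inner_comm]
  -- T facts
  have hTmem : ∀ k ∈ T, k ≠ i₁ ∧ k ≠ i₂ := by
    intro k hk
    rw [hT, Finset.mem_erase, Finset.mem_erase] at hk
    exact ⟨hk.2.1, hk.1⟩
  -- the strict sum inequality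
  have hsum : ∑ k ∈ T, (h ⟪y i₁, y k⟫ + h ⟪y k, y i₁⟫ + h ⟪y i₂, y k⟫ + h ⟪y k, y i₂⟫)
      < ∑ k ∈ T, (h ⟪x i₁, x k⟫ + h ⟪x k, x i₁⟫ + h ⟪x i₂, x k⟫ + h ⟪x k, x i₂⟫) := by
    have key : ∀ k ∈ T,
        (h ⟪y i₁, y k⟫ + h ⟪y k, y i₁⟫ + h ⟪y i₂, y k⟫ + h ⟪y k, y i₂⟫)
        = 2 * (h ((4/5) * ⟪x i₁, x k⟫ + (1/5) * ⟪x i₂, x k⟫)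
             + h ((1/5) * ⟪x i₁, x k⟫ + (4/5) * ⟪x i₂, x k⟫))
        ∧ (h ⟪x i₁, x k⟫ + h ⟪x k, x i₁⟫ + h ⟪x i₂, x k⟫ + h ⟪x k, x i₂⟫)
        = 2 * (h ⟪x i₁, x k⟫ + h ⟪x i₂, x k⟫) := by
      intro k hk
      obtain ⟨hk1, hk2⟩ := hTmem k hk
      have hyk' : y k = x k := hyk k hk1 hk2
      have hA : ⟪x i₁, x k⟫ = r * x k e0 + s * x k e1 := by
        rw [inner3 e0 e1 dl ne01 ne0l ne1l (x i₁) (x k) hz1, hx1.1, hx1.2.1, hx1l,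
          hplane k]
        ring
      have hB : ⟪x i₂, x k⟫ = r * x k e0 - s * x k e1 := by
        rw [inner3 e0 e1 dl ne01 ne0l ne1l (x i₂) (x k) hz2, hx2.1, hx2.2.1, hx2l,
          hplane k]
        ring
      have hU : ⟪y i₁, y k⟫ = (4/5) * ⟪x i₁, x k⟫ + (1/5) * ⟪x i₂, x k⟫ := by
        rw [hyi1, hyk', inner3 e0 e1 dl ne01 ne0l ne1l u (x k) hzu,
          hue0, hue1, huel, hplane k, hA, hB]
        ring
      have hV : ⟪y i₂, y k⟫ = (1/5) * ⟪x i₁, x k⟫ + (4/5) * ⟪x i₂, x k⟫ := by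
        rw [hyi2, hyk', inner3 e0 e1 dl ne01 ne0l ne1l v (x k) hzv,
          hve0, hve1, hvel, hplane k, hA, hB]
        ring
      constructor
      · rw [real_inner_comm (y i₁) (y k), real_inner_comm (y i₂) (y k), hU, hV]
        ring
      · rw [real_inner_comm (x i₁) (x k), real_inner_comm (x i₂) (x k)]
        ring
    apply Finset.sum_lt_sum
    · intro k hk
      obtain ⟨hk1, hk2⟩ := hTmem k hk
      obtain ⟨hEy, hEx⟩ := key k hk
      rw [hEy, hEx]
      by_cases hb : x k e1 = 0
      · have hAB : ⟪x i₁, x k⟫ = ⟪x i₂, x k⟫ := by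
          rw [inner3 e0 e1 dl ne01 ne0l ne1l (x i₁) (x k) hz1,
            inner3 e0 e1 dl ne01 ne0l ne1l (x i₂) (x k) hz2,
            hx1.1, hx1.2.1, hx1l, hx2.1, hx2.2.1, hx2l, hb]
          ring
        rw [hAB]
        have : (4/5 : ℝ) * ⟪x i₂, x k⟫ + (1/5) * ⟪x i₂, x k⟫ = ⟪x i₂, x k⟫ := by ring
        rw [this]
        have : (1/5 : ℝ) * ⟪x i₂, x k⟫ + (4/5) * ⟪x i₂, x k⟫ = ⟪x i₂, x k⟫ := by ring
        rw [this]
      · have hAB : ⟪x i₁, x k⟫ ≠ ⟪x i₂, x k⟫ := by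
          rw [inner3 e0 e1 dl ne01 ne0l ne1l (x i₁) (x k) hz1,
            inner3 e0 e1 dl ne01 ne0l ne1l (x i₂) (x k) hz2,
            hx1.1, hx1.2.1, hx1l, hx2.1, hx2.2.1, hx2l]
          intro heq
          apply hb
          have hsb : s * x k e1 = 0 := by linarith
          exact (mul_eq_zero.mp hsb).resolve_left (ne_of_gt hs0)
        have hIcc1 : ⟪x i₁, x k⟫ ∈ Set.Icc (-1 : ℝ) 1 := by
          rw [Set.mem_Icc, ← abs_le]
          calc |⟪x i₁, x k⟫| ≤ ‖x i₁‖ * ‖x k‖ := abs_real_inner_le_norm _ _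
            _ = 1 := by rw [hunit, hunit]; ring
        have hIcc2 : ⟪x i₂, x k⟫ ∈ Set.Icc (-1 : ℝ) 1 := by
          rw [Set.mem_Icc, ← abs_le]
          calc |⟪x i₂, x k⟫| ≤ ‖x i₂‖ * ‖x k‖ := abs_real_inner_le_norm _ _
            _ = 1 := by rw [hunit, hunit]; ring
        have := key_lt h hconv _ _ hIcc1 hIcc2 hAB
        linarith
    · refine ⟨i₃, ?_, ?_⟩
      · rw [hT, Finset.mem_erase, Finset.mem_erase]
        exact ⟨h23.symm, h13.symm, Finset.mem_univ _⟩
      · obtain ⟨hEy, hEx⟩ := key i₃ (by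
          rw [hT, Finset.mem_erase, Finset.mem_erase]
          exact ⟨h23.symm, h13.symm, Finset.mem_univ _⟩)
        rw [hEy, hEx]
        have hAB : ⟪x i₁, x i₃⟫ ≠ ⟪x i₂, x i₃⟫ := by
          rw [inner3 e0 e1 dl ne01 ne0l ne1l (x i₁) (x i₃) hz1,
            inner3 e0 e1 dl ne01 ne0l ne1l (x i₂) (x i₃) hz2,
            hx1.1, hx1.2.1, hx1l, hx2.1, hx2.2.1, hx2l]
          intro heq
          apply hx3
          have hsb : s * x i₃ e1 = 0 := by linarith
          exact (mul_eq_zero.mp hsb).resolve_left (ne_of_gt hs0)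
        have hIcc1 : ⟪x i₁, x i₃⟫ ∈ Set.Icc (-1 : ℝ) 1 := by
          rw [Set.mem_Icc, ← abs_le]
          calc |⟪x i₁, x i₃⟫| ≤ ‖x i₁‖ * ‖x i₃‖ := abs_real_inner_le_norm _ _
            _ = 1 := by rw [hunit, hunit]; ring
        have hIcc2 : ⟪x i₂, x i₃⟫ ∈ Set.Icc (-1 : ℝ) 1 := by
          rw [Set.mem_Icc, ← abs_le]
          calc |⟪x i₂, x i₃⟫| ≤ ‖x i₂‖ * ‖x i₃‖ := abs_real_inner_le_norm _ _
            _ = 1 := by rw [hunit, hunit]; ring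
        have := key_lt h hconv _ _ hIcc1 hIcc2 hAB
        linarith
  -- remaining double sum equal
  have hrest : ∑ k ∈ T, ∑ j ∈ T.erase k, h ⟪y k, y j⟫
      = ∑ k ∈ T, ∑ j ∈ T.erase k, h ⟪x k, x j⟫ := by
    apply Finset.sum_congr rfl
    intro k hk
    apply Finset.sum_congr rfl
    intro j hj
    obtain ⟨hk1, hk2⟩ := hTmem k hk
    obtain ⟨hj1, hj2⟩ := hTmem j (Finset.mem_of_mem_erase hj)
    rw [hyk k hk1 hk2, hyk j hj1 hj2]
  rw [hmut, hmut', hrest]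
  linarith [hsum]
end

section
/- Let p_1, …, p_m ∈ ℝ^{m-1} be the vertices of a regular simplex inscribed in the unit sphere with centroid at the origin (so p_i·p_j = -1/(m-1) for i ≠ j), m ≥ 3, and let a_1, …, a_m ∈ ℝ^{m-1} satisfy p_i·a_i = 0 for all i. Then ((m-1)/m)² ∑_{1 ≤ i < j ≤ m} (p_i·a_j + p_j·a_i)² ≥ (1/m) ‖∑_{i=1}^m a_i‖². -/
open Finset RealInnerProductSpace

-- double sum of a symmetric, zero-diagonal function equals twice the upper-triangular sum
lemma dsum_symm {n : ℕ} (f : Fin n → Fin n → ℝ) (hs : ∀ i j, f i j = f j i)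
    (hd : ∀ i, f i i = 0) :
    ∑ i, ∑ j, f i j = 2 * ∑ i, ∑ j ∈ univ.filter (fun j => i < j), f i j := by
  have hswap : ∑ i, ∑ j ∈ univ.filter (fun j => j < i), f i j
      = ∑ i, ∑ j ∈ univ.filter (fun j => i < j), f i j := by
    rw [Finset.sum_comm' (t' := univ) (s' := fun j => univ.filter (fun i => j < i))
      (by intro i j; simp)]
    exact Finset.sum_congr rfl fun i _ => Finset.sum_congr rfl fun j _ => hs j i
  have hsplit : ∀ i : Fin n, ∑ j, f i j
      = (∑ j ∈ univ.filter (fun j => i < j), f i j)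
        + ∑ j ∈ univ.filter (fun j => j < i), f i j := by
    intro i
    rw [← Finset.sum_filter_add_sum_filter_not univ (fun j => i < j) (f i)]
    congr 1
    have : univ.filter (fun j => ¬ i < j) = insert i (univ.filter (fun j => j < i)) := by
      ext j; simp [Finset.mem_insert]; omega
    rw [this, Finset.sum_insert (by simp), hd]
    simp
  calc ∑ i, ∑ j, f i j
      = (∑ i, ∑ j ∈ univ.filter (fun j => i < j), f i j)
        + ∑ i, ∑ j ∈ univ.filter (fun j => j < i), f i j := by
        rw [← Finset.sum_add_distrib]; exact Finset.sum_congr rfl fun i _ => hsplit i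
    _ = 2 * ∑ i, ∑ j ∈ univ.filter (fun j => i < j), f i j := by rw [hswap]; ring

lemma key_alg {n : ℕ} (hn : 3 ≤ n) (x : Fin n → Fin n → ℝ) (c : Fin n → ℝ)
    (hd : ∀ i, x i i = 0) (hrow : ∀ i, ∑ j, x i j = c i) (hcol : ∀ j, ∑ i, x i j = c j)
    (hc0 : ∑ i, c i = 0) :
    ∑ i, c i ^ 2 ≤ ((n : ℝ) - 2) / 2 * ∑ i, ∑ j, (x i j) ^ 2 := by
  have hn2 : (0:ℝ) < (n : ℝ) - 2 := by
    have : (3:ℝ) ≤ (n:ℝ) := by exact_mod_cast hn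
    linarith
  set l : ℝ := 1 / ((n:ℝ) - 2) with hl
  -- the off-diagonal SOS is nonneg
  have hpos : 0 ≤ ∑ i, ((∑ j, (x i j - l * (c i + c j)) ^ 2) - (x i i - l * (c i + c i)) ^ 2) := by
    apply Finset.sum_nonneg
    intro i _
    rw [← Finset.sum_erase_eq_sub (Finset.mem_univ i)]
    exact Finset.sum_nonneg fun j _ => sq_nonneg _
  -- expand the SOS
  have hB : ∑ i, ∑ j, x i j * c i = ∑ i, c i ^ 2 := by
    refine Finset.sum_congr rfl fun i _ => ?_
    rw [← Finset.sum_mul, hrow]; ring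
  have hB' : ∑ i, ∑ j, x i j * c j = ∑ i, c i ^ 2 := by
    rw [Finset.sum_comm]
    refine Finset.sum_congr rfl fun j _ => ?_
    rw [← Finset.sum_mul, hcol]; ring
  have hD : ∑ i, ∑ j, (c i + c j) ^ 2 = 2 * n * ∑ i, c i ^ 2 := by
    have h1 : ∀ i : Fin n, ∑ j, (c i + c j) ^ 2 = n * c i ^ 2 + ∑ j, c j ^ 2 := by
      intro i
      have e : ∀ j : Fin n, (c i + c j) ^ 2 = c i ^ 2 + 2 * c i * c j + c j ^ 2 :=
        fun j => by ring
      rw [Finset.sum_congr rfl fun j _ => e j, Finset.sum_add_distrib,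
        Finset.sum_add_distrib, Finset.sum_const, Finset.card_univ, Fintype.card_fin,
        ← Finset.mul_sum, hc0, nsmul_eq_mul]
      ring
    rw [Finset.sum_congr rfl fun i _ => h1 i, Finset.sum_add_distrib, ← Finset.mul_sum,
      Finset.sum_const, Finset.card_univ, Fintype.card_fin, nsmul_eq_mul]
    ring
  have hexp : ∀ i j : Fin n, (x i j - l * (c i + c j)) ^ 2
      = (x i j) ^ 2 - 2 * l * (x i j * c i) - 2 * l * (x i j * c j)
        + l ^ 2 * (c i + c j) ^ 2 := fun i j => by ring
  have hdiag : ∑ i, (x i i - l * (c i + c i)) ^ 2 = 4 * l ^ 2 * ∑ i, c i ^ 2 := by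
    simp_rw [hd]
    rw [Finset.mul_sum]
    exact Finset.sum_congr rfl fun i _ => by ring
  have hfull : ∑ i, ∑ j, (x i j - l * (c i + c j)) ^ 2
      = (∑ i, ∑ j, (x i j) ^ 2) - 4 * l * (∑ i, c i ^ 2)
        + 2 * n * l ^ 2 * ∑ i, c i ^ 2 := by
    simp_rw [hexp, Finset.sum_add_distrib, Finset.sum_sub_distrib, ← Finset.mul_sum]
    rw [hB, hB', hD]
    ring
  rw [Finset.sum_sub_distrib, hfull, hdiag] at hpos
  set C2 := ∑ i, c i ^ 2 with hC2
  set S2 := ∑ i, ∑ j, (x i j) ^ 2 with hS2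
  have hd2 : (0:ℝ) < ((n:ℝ) - 2) ^ 2 := by positivity
  have eq2 : ((n:ℝ) - 2) ^ 2 * (S2 - 4 * l * C2 + 2 * (n:ℝ) * l ^ 2 * C2 - 4 * l ^ 2 * C2)
      = ((n:ℝ) - 2) * (((n:ℝ) - 2) * S2 - 2 * C2) := by
    rw [hl]; field_simp; ring
  have key : 0 ≤ ((n:ℝ) - 2) * (((n:ℝ) - 2) * S2 - 2 * C2) := by
    have h := mul_nonneg hd2.le hpos
    linarith [eq2, h]
  nlinarith [key, hn2]

lemma frame_identity {m : ℕ} (hm : 3 ≤ m)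
    (p : Fin m → EuclideanSpace ℝ (Fin (m - 1)))
    (hunit : ∀ i, ‖p i‖ = 1)
    (hinner : ∀ i j, i ≠ j → ⟪p i, p j⟫ = -1 / ((m : ℝ) - 1))
    (hcent : ∑ i, p i = 0) (v : EuclideanSpace ℝ (Fin (m - 1))) :
    ∑ i, ⟪p i, v⟫ • p i = ((m : ℝ) / ((m : ℝ) - 1)) • v := by
  classical
  have hm3 : (3 : ℝ) ≤ (m : ℝ) := by exact_mod_cast hm
  have hm1 : ((m : ℝ) - 1) ≠ 0 := by linarith
  have hm0 : ((m : ℝ)) ≠ 0 := by linarith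
  have hself : ∀ i, ⟪p i, p i⟫ = 1 := by
    intro i; rw [real_inner_self_eq_norm_sq, hunit]; norm_num
  set K : Submodule ℝ (EuclideanSpace ℝ (Fin (m - 1))) :=
    { carrier := {w | ∑ i, ⟪p i, w⟫ • p i = ((m : ℝ) / ((m : ℝ) - 1)) • w}
      add_mem' := by
        intro u w hu hw
        simp only [Set.mem_setOf_eq] at hu hw ⊢
        simp only [inner_add_right, add_smul, Finset.sum_add_distrib, hu, hw, smul_add]
      zero_mem' := by
        simp only [Set.mem_setOf_eq, inner_zero_right, zero_smul, Finset.sum_const_zero,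
          smul_zero]
      smul_mem' := by
        intro r w hw
        simp only [Set.mem_setOf_eq] at hw ⊢
        simp only [real_inner_smul_right, mul_smul, ← Finset.smul_sum, hw]
        rw [smul_comm] } with hK
  have hpK : ∀ k, p k ∈ K := by
    intro k
    show ∑ i, ⟪p i, p k⟫ • p i = ((m : ℝ) / ((m : ℝ) - 1)) • p k
    have hterm : ∀ i : Fin m, ⟪p i, p k⟫ • p i
        = (-1 / ((m : ℝ) - 1)) • p i
          + (if i = k then ((m : ℝ) / ((m : ℝ) - 1)) • p k else 0) := by
      intro i
      by_cases h : i = k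
      · subst h
        rw [hself i, if_pos rfl, ← add_smul]
        have h1 : (1 : ℝ) = -1 / ((m : ℝ) - 1) + (m : ℝ) / ((m : ℝ) - 1) := by
          field_simp
          ring
        rw [← h1]
      · rw [hinner i k h, if_neg h, add_zero]
    rw [Finset.sum_congr rfl fun i _ => hterm i, Finset.sum_add_distrib, ← Finset.smul_sum,
      hcent, smul_zero, zero_add, Finset.sum_ite_eq' univ k, if_pos (Finset.mem_univ k)]
  haveI : Nonempty (Fin (m - 1)) := ⟨⟨0, by omega⟩⟩
  have hli : LinearIndependent ℝ (fun k => p (Fin.castLE (Nat.sub_le m 1) k)) := by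
    have heinj : Function.Injective (Fin.castLE (Nat.sub_le m 1) : Fin (m - 1) → Fin m) :=
      Fin.castLE_injective _
    rw [Fintype.linearIndependent_iff]
    intro g hg
    have hkey : ∀ k0 : Fin (m - 1),
        (∑ k, g k) * (-1 / ((m : ℝ) - 1)) + g k0 * ((m : ℝ) / ((m : ℝ) - 1)) = 0 := by
      intro k0
      have h0 : ⟪∑ k, g k • p (Fin.castLE (Nat.sub_le m 1) k),
          p (Fin.castLE (Nat.sub_le m 1) k0)⟫ = 0 := by
        rw [hg]; exact inner_zero_left _
      rw [sum_inner] at h0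
      simp_rw [real_inner_smul_left] at h0
      have hterm2 : ∀ k : Fin (m - 1),
          g k * ⟪p (Fin.castLE (Nat.sub_le m 1) k), p (Fin.castLE (Nat.sub_le m 1) k0)⟫
          = g k * (-1 / ((m : ℝ) - 1))
            + (if k = k0 then g k * ((m : ℝ) / ((m : ℝ) - 1)) else 0) := by
        intro k
        by_cases h : k = k0
        · subst h
          rw [hself, if_pos rfl, mul_one]
          have h1 : (1 : ℝ) = -1 / ((m : ℝ) - 1) + (m : ℝ) / ((m : ℝ) - 1) := by
            field_simp
            ring
          calc g k = g k * (-1 / ((m : ℝ) - 1) + (m : ℝ) / ((m : ℝ) - 1)) := by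
                rw [← h1, mul_one]
            _ = g k * (-1 / ((m : ℝ) - 1)) + g k * ((m : ℝ) / ((m : ℝ) - 1)) := by ring
        · rw [hinner _ _ (fun hc => h (heinj hc)), if_neg h, add_zero]
      rw [Finset.sum_congr rfl fun k _ => hterm2 k, Finset.sum_add_distrib,
        ← Finset.sum_mul, Finset.sum_ite_eq' univ k0, if_pos (Finset.mem_univ k0)] at h0
      exact h0
    have h2 : ∀ k0 : Fin (m - 1), g k0 * (m : ℝ) = ∑ k, g k := by
      intro k0
      have h5 := hkey k0
      have h6 : ((∑ k, g k) * (-1 / ((m : ℝ) - 1)) + g k0 * ((m : ℝ) / ((m : ℝ) - 1)))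
          * ((m : ℝ) - 1) = g k0 * (m : ℝ) - ∑ k, g k := by
        field_simp
        ring
      rw [h5, zero_mul] at h6
      linarith
    have hG : ∑ k, g k = 0 := by
      have h3 : (∑ k0 : Fin (m - 1), g k0 * (m : ℝ)) = ∑ k0 : Fin (m - 1), ∑ k, g k :=
        Finset.sum_congr rfl fun k0 _ => h2 k0
      rw [← Finset.sum_mul, Finset.sum_const, Finset.card_univ, Fintype.card_fin,
        nsmul_eq_mul] at h3
      have hcast : ((m - 1 : ℕ) : ℝ) = (m : ℝ) - 1 := by
        rw [Nat.cast_sub (by omega : 1 ≤ m)]; norm_num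
      rw [hcast] at h3
      nlinarith [h3]
    intro k0
    have h7 := h2 k0
    rw [hG] at h7
    rcases mul_eq_zero.mp h7 with h | h
    · exact h
    · exact absurd h hm0
  have hcard : Fintype.card (Fin (m - 1)) =
      Module.finrank ℝ (EuclideanSpace ℝ (Fin (m - 1))) := by
    rw [finrank_euclideanSpace, Fintype.card_fin]
  have hspan := hli.span_eq_top_of_card_eq_finrank hcard
  have htop : (⊤ : Submodule ℝ (EuclideanSpace ℝ (Fin (m - 1)))) ≤ K := by
    rw [← hspan]
    refine Submodule.span_le.mpr ?_
    rintro w ⟨k, rfl⟩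
    exact hpK _
  exact htop Submodule.mem_top

theorem stmt_17 (m : ℕ) (hm : 3 ≤ m)
    (p a : Fin m → EuclideanSpace ℝ (Fin (m - 1)))
    (hunit : ∀ i, ‖p i‖ = 1)
    (hinner : ∀ i j, i ≠ j → ⟪p i, p j⟫ = -1 / ((m : ℝ) - 1))
    (hcent : ∑ i, p i = 0)
    (horth : ∀ i, ⟪p i, a i⟫ = 0) :
    (((m : ℝ) - 1) / m) ^ 2 *
        ∑ i, ∑ j ∈ univ.filter (fun j => i < j), (⟪p i, a j⟫ + ⟪p j, a i⟫) ^ 2 ≥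
      (1 / (m : ℝ)) * ‖∑ i, a i‖ ^ 2 := by
  classical
  have hm3 : (3 : ℝ) ≤ (m : ℝ) := by exact_mod_cast hm
  have hm1 : ((m : ℝ) - 1) ≠ 0 := by linarith
  have hm0 : ((m : ℝ)) ≠ 0 := by linarith
  -- the norm identity
  have hframe := frame_identity hm p hunit hinner hcent (∑ i, a i)
  have hnorm : ‖∑ i, a i‖ ^ 2
      = (((m : ℝ) - 1) / m) * ∑ i, ⟪p i, ∑ j, a j⟫ ^ 2 := by
    have h1 : ⟪∑ i, ⟪p i, ∑ j, a j⟫ • p i, ∑ j, a j⟫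
        = ((m : ℝ) / ((m : ℝ) - 1)) * ⟪∑ j, a j, ∑ j, a j⟫ := by
      rw [hframe, real_inner_smul_left]
    rw [sum_inner] at h1
    simp_rw [real_inner_smul_left] at h1
    have h2 : ∑ i, ⟪p i, ∑ j, a j⟫ * ⟪p i, ∑ j, a j⟫
        = ∑ i, ⟪p i, ∑ j, a j⟫ ^ 2 :=
      Finset.sum_congr rfl fun i _ => (sq _).symm
    rw [h2, real_inner_self_eq_norm_sq] at h1
    have hmm : ((m : ℝ) / ((m : ℝ) - 1)) ≠ 0 := by positivity
    field_simp at h1 ⊢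
    linarith [h1]
  -- the combinatorial inequality
  have hrow : ∀ i : Fin m, ∑ j, (⟪p i, a j⟫ + ⟪p j, a i⟫) = ⟪p i, ∑ j, a j⟫ := by
    intro i
    rw [Finset.sum_add_distrib, ← inner_sum, ← sum_inner, hcent, inner_zero_left, add_zero]
  have hcol : ∀ j : Fin m, ∑ i, (⟪p i, a j⟫ + ⟪p j, a i⟫) = ⟪p j, ∑ i, a i⟫ := by
    intro j
    rw [Finset.sum_add_distrib, ← inner_sum, ← sum_inner, hcent, inner_zero_left, zero_add]
  have hc0 : ∑ i, ⟪p i, ∑ j, a j⟫ = 0 := by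
    rw [← sum_inner, hcent, inner_zero_left]
  have hd : ∀ i : Fin m, ⟪p i, a i⟫ + ⟪p i, a i⟫ = 0 := by
    intro i; rw [horth i]; ring
  have key := key_alg hm (fun i j => ⟪p i, a j⟫ + ⟪p j, a i⟫)
    (fun i => ⟪p i, ∑ j, a j⟫) (fun i => hd i) (fun i => hrow i) (fun j => hcol j) hc0
  have hdd := dsum_symm (fun i j => (⟪p i, a j⟫ + ⟪p j, a i⟫) ^ 2)
    (fun i j => show (⟪p i, a j⟫ + ⟪p j, a i⟫) ^ 2 = (⟪p j, a i⟫ + ⟪p i, a j⟫) ^ 2 by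
      rw [add_comm])
    (fun i => show (⟪p i, a i⟫ + ⟪p i, a i⟫) ^ 2 = 0 by rw [hd i]; norm_num)
  rw [hdd] at key
  set T := ∑ i, ∑ j ∈ univ.filter (fun j => i < j), (⟪p i, a j⟫ + ⟪p j, a i⟫) ^ 2 with hT
  set C2 := ∑ i, ⟪p i, ∑ j, a j⟫ ^ 2 with hC2
  have hT0 : (0 : ℝ) ≤ T := by
    apply Finset.sum_nonneg; intro i _
    exact Finset.sum_nonneg fun j _ => sq_nonneg _
  have hC20 : (0 : ℝ) ≤ C2 := Finset.sum_nonneg fun i _ => sq_nonneg _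
  -- key : C2 ≤ (m-2)/2 * (2 * T)
  rw [ge_iff_le, hnorm]
  have h6 : ((m : ℝ) - 1) * C2 ≤ ((m : ℝ) - 1) ^ 2 * T := by
    nlinarith [key, hT0, hC20]
  have e1 : (1 / (m : ℝ)) * ((((m : ℝ) - 1) / m) * C2)
      = (((m : ℝ) - 1) * C2) / (m : ℝ) ^ 2 := by ring
  have e2 : ((((m : ℝ) - 1) / m)) ^ 2 * T = (((m : ℝ) - 1) ^ 2 * T) / (m : ℝ) ^ 2 := by
    ring
  rw [e1, e2]
  exact div_le_div_of_nonneg_right h6 (by positivity)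
end

section
/- Let p_1, …, p_m ∈ ℝ^{m-1} be vertices of a regular unit-sphere simplex with centroid 0 (p_i·p_j = -1/(m-1) for i ≠ j), and q_1, …, q_n ∈ ℝ^{n-1} vertices of a regular unit-sphere simplex with centroid 0. Let b_1, …, b_m ∈ ℝ^{n-1} and c_1, …, c_n ∈ ℝ^{m-1} be arbitrary vectors. Then ∑_{i=1}^m ∑_{j=1}^n (p_i·c_j + q_j·b_i)² ≥ (1/m) ‖∑_{i=1}^m b_i‖² + (1/n) ‖∑_{j=1}^n c_j‖². -/
open Finset RealInnerProductSpace

lemma frame_ineq (n : ℕ) (hn : 2 ≤ n) (q : Fin n → EuclideanSpace ℝ (Fin (n - 1)))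
    (hunit : ∀ i, ‖q i‖ = 1)
    (hinner : ∀ i j, i ≠ j → ⟪q i, q j⟫ = -1 / ((n : ℝ) - 1))
    (hcent : ∑ j, q j = 0) (x : EuclideanSpace ℝ (Fin (n - 1))) :
    ‖x‖ ^ 2 ≤ ∑ j, ⟪q j, x⟫ ^ 2 := by
  have hn1 : (1 : ℝ) ≤ (n : ℝ) - 1 := by
    have : (2 : ℝ) ≤ (n : ℝ) := by exact_mod_cast hn
    linarith
  have hne : ((n : ℝ) - 1) ≠ 0 := by linarith
  have hnpos : (0 : ℝ) < (n : ℝ) := by linarith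
  have hself : ∀ k, ⟪q k, q k⟫ = 1 := fun k => by
    rw [real_inner_self_eq_norm_sq, hunit k]; norm_num
  -- generic computation of inner of q k with a combination
  have hcomb : ∀ (g : Fin n → ℝ) (k : Fin n),
      ⟪q k, ∑ j, g j • q j⟫ = g k * ((n : ℝ) / ((n : ℝ) - 1))
        - (∑ j, g j) / ((n : ℝ) - 1) := by
    intro g k
    rw [inner_sum]
    simp_rw [real_inner_smul_right]
    rw [← Finset.add_sum_erase _ _ (mem_univ k), hself]
    have h1 : ∑ j ∈ univ.erase k, g j * ⟪q k, q j⟫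
        = ∑ j ∈ univ.erase k, g j * (-1 / ((n : ℝ) - 1)) := by
      refine Finset.sum_congr rfl fun j hj => ?_
      rw [hinner _ _ (Ne.symm (Finset.mem_erase.1 hj).1)]
    rw [h1, ← Finset.sum_mul, Finset.sum_erase_eq_sub (mem_univ k)]
    field_simp
    ring
  -- span is top
  set e : Fin (n - 1) → Fin n := Fin.castLE (Nat.sub_le n 1) with he_def
  have he : Function.Injective e := Fin.castLE_injective _
  have hli : LinearIndependent ℝ (q ∘ e) := by
    rw [Fintype.linearIndependent_iff]
    intro g hg
    set G : Fin n → ℝ := fun i => if h : (i : ℕ) < n - 1 then g ⟨i, h⟩ else 0 with hG_def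
    have hGe : ∀ j : Fin (n - 1), G (e j) = g j := by
      intro j; simp only [hG_def, he_def, Fin.coe_castLE, j.2, dif_pos]
    have hGsum : ∑ i, G i • q i = 0 := by
      rw [← Finset.sum_subset (Finset.subset_univ (Finset.univ.image e))]
      · rw [Finset.sum_image (fun a _ b _ h => he h)]
        simp_rw [hGe]
        simpa using hg
      · intro i _ hi
        have : ¬ ((i : ℕ) < n - 1) := by
          intro h
          exact hi (Finset.mem_image.2 ⟨⟨i, h⟩, mem_univ _, Fin.ext rfl⟩)
        simp [hG_def, this]
    have hGsum' : ∑ i, G i = ∑ j, g j := by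
      rw [← Finset.sum_subset (Finset.subset_univ (Finset.univ.image e))]
      · rw [Finset.sum_image (fun a _ b _ h => he h)]
        simp_rw [hGe]
      · intro i _ hi
        have : ¬ ((i : ℕ) < n - 1) := by
          intro h
          exact hi (Finset.mem_image.2 ⟨⟨i, h⟩, mem_univ _, Fin.ext rfl⟩)
        simp [hG_def, this]
    have key : ∀ j : Fin (n - 1), g j * (n : ℝ) = ∑ j, g j := by
      intro j
      have := hcomb G (e j)
      rw [hGsum, inner_zero_right, hGe, hGsum'] at this
      have := this.symm
      field_simp at this
      linarith [this]
    have hA : (∑ j, g j) = 0 := by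
      have hsum : (∑ j, g j) * (n : ℝ) = ((n : ℝ) - 1) * ∑ j, g j := by
        calc (∑ j, g j) * (n : ℝ) = ∑ j, g j * (n : ℝ) := by rw [Finset.sum_mul]
        _ = ∑ _j : Fin (n - 1), ∑ j, g j := Finset.sum_congr rfl fun j _ => key j
        _ = ((n : ℝ) - 1) * ∑ j, g j := by
            rw [Finset.sum_const, card_univ, Fintype.card_fin, nsmul_eq_mul]
            congr 1
            have : (1 : ℕ) ≤ n := by omega
            push_cast [Nat.cast_sub this]
            ring
      nlinarith [hsum]
    intro j
    have := key j
    rw [hA] at this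
    have := mul_eq_zero.1 this
    rcases this with h | h
    · exact h
    · exact absurd h (by positivity)
  have hspan : Submodule.span ℝ (Set.range q) = ⊤ := by
    have h1 : Submodule.span ℝ (Set.range (q ∘ e)) = ⊤ := by
      have : Nonempty (Fin (n - 1)) := ⟨⟨0, by omega⟩⟩
      exact hli.span_eq_top_of_card_eq_finrank (by simp [finrank_euclideanSpace])
    refine top_unique ?_
    rw [← h1]
    exact Submodule.span_mono (Set.range_comp_subset_range e q)
  -- the frame identity
  set y : EuclideanSpace ℝ (Fin (n - 1)) :=
    (∑ j, ⟪q j, x⟫ • q j) - ((n : ℝ) / ((n : ℝ) - 1)) • x with hy_def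
  have hT : (∑ j, ⟪q j, x⟫) = 0 := by
    rw [← sum_inner, hcent, inner_zero_left]
  have hky : ∀ k, ⟪q k, y⟫ = 0 := by
    intro k
    rw [hy_def, inner_sub_right, hcomb (fun j => ⟪q j, x⟫) k, hT,
      real_inner_smul_right]
    ring
  have hy0 : y = 0 := by
    have hmem : y ∈ Submodule.span ℝ (Set.range q) := by rw [hspan]; trivial
    have : ∀ u ∈ Submodule.span ℝ (Set.range q), ⟪u, y⟫ = 0 := by
      intro u hu
      induction hu using Submodule.span_induction with
      | mem u hu => obtain ⟨k, rfl⟩ := hu; exact hky k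
      | zero => simp
      | add u v _ _ hu hv => rw [inner_add_left, hu, hv]; ring
      | smul a u _ hu => rw [real_inner_smul_left, hu]; ring
    have := this y hmem
    exact inner_self_eq_zero.1 this
  have hkey : ∑ j, ⟪q j, x⟫ ^ 2 = ((n : ℝ) / ((n : ℝ) - 1)) * ‖x‖ ^ 2 := by
    have h1 : ⟪x, ∑ j, ⟪q j, x⟫ • q j⟫ = ∑ j, ⟪q j, x⟫ ^ 2 := by
      rw [inner_sum]
      refine Finset.sum_congr rfl fun j _ => ?_
      rw [real_inner_smul_right, real_inner_comm]
      ring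
    have h2 : (∑ j, ⟪q j, x⟫ • q j) = ((n : ℝ) / ((n : ℝ) - 1)) • x := by
      have := sub_eq_zero.1 (hy_def ▸ hy0)
      exact this
    rw [h2, real_inner_smul_right, real_inner_self_eq_norm_sq] at h1
    rw [← h1]
  rw [hkey]
  have hx : (0 : ℝ) ≤ ‖x‖ ^ 2 := by positivity
  have hc : (1 : ℝ) ≤ (n : ℝ) / ((n : ℝ) - 1) := by
    rw [le_div_iff₀ (by linarith)]
    linarith
  nlinarith
theorem stmt_18 (m n : ℕ) (hm : 2 ≤ m) (hn : 2 ≤ n)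
    (p : Fin m → EuclideanSpace ℝ (Fin (m - 1)))
    (q : Fin n → EuclideanSpace ℝ (Fin (n - 1)))
    (hpunit : ∀ i, ‖p i‖ = 1) (hqunit : ∀ j, ‖q j‖ = 1)
    (hpinner : ∀ i j, i ≠ j → ⟪p i, p j⟫ = -1 / ((m : ℝ) - 1))
    (hqinner : ∀ i j, i ≠ j → ⟪q i, q j⟫ = -1 / ((n : ℝ) - 1))
    (hpcent : ∑ i, p i = 0) (hqcent : ∑ j, q j = 0)
    (b : Fin m → EuclideanSpace ℝ (Fin (n - 1)))
    (c : Fin n → EuclideanSpace ℝ (Fin (m - 1))) :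
    ∑ i, ∑ j, (⟪p i, c j⟫ + ⟪q j, b i⟫) ^ 2 ≥
      (1 / (m : ℝ)) * ‖∑ i, b i‖ ^ 2 + (1 / (n : ℝ)) * ‖∑ j, c j‖ ^ 2 := by
  have hmpos : (0 : ℝ) < (m : ℝ) := by
    have : (0:ℕ) < m := by omega
    exact_mod_cast this
  have hnpos : (0 : ℝ) < (n : ℝ) := by
    have : (0:ℕ) < n := by omega
    exact_mod_cast this
  set B := ∑ i, b i with hB
  set C := ∑ j, c j with hC
  set x : Fin m → Fin n → ℝ := fun i j => ⟪p i, c j⟫ + ⟪q j, b i⟫ with hx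
  set s : Fin n → ℝ := fun j => ⟪q j, B⟫ with hs
  set t : Fin m → ℝ := fun i => ⟪p i, C⟫ with ht
  have hcol : ∀ j, ∑ i, x i j = s j := by
    intro j
    simp only [hx, hs, Finset.sum_add_distrib]
    rw [← sum_inner, hpcent, inner_zero_left, ← inner_sum, ← hB, zero_add]
  have hrow : ∀ i, ∑ j, x i j = t i := by
    intro i
    simp only [hx, ht, Finset.sum_add_distrib]
    rw [← inner_sum, ← hC, ← sum_inner, hqcent, inner_zero_left, add_zero]
  have hssum : ∑ j, s j = 0 := by
    simp only [hs]
    rw [← sum_inner, hqcent, inner_zero_left]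
  set r : Fin m → Fin n → ℝ := fun i j => x i j - s j / m with hr
  -- column decomposition
  have hdec : ∑ i, ∑ j, (x i j) ^ 2
      = (∑ i, ∑ j, (r i j) ^ 2) + (1 / (m:ℝ)) * ∑ j, (s j) ^ 2 := by
    rw [Finset.sum_comm (f := fun i j => (x i j) ^ 2),
      Finset.sum_comm (f := fun i j => (r i j) ^ 2), Finset.mul_sum,
      ← Finset.sum_add_distrib]
    refine Finset.sum_congr rfl fun j _ => ?_
    have hexp : ∀ i : Fin m, (r i j) ^ 2
        = (x i j) ^ 2 - 2 * (s j / m) * (x i j) + (s j / m) ^ 2 := by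
      intro i; simp only [hr]; ring
    rw [Finset.sum_congr rfl fun i _ => hexp i]
    rw [Finset.sum_add_distrib, Finset.sum_sub_distrib, ← Finset.mul_sum, hcol j,
      Finset.sum_const, Finset.card_univ, Fintype.card_fin, nsmul_eq_mul]
    field_simp
    ring
  -- row sums of residuals
  have hrrow : ∀ i, ∑ j, r i j = t i := by
    intro i
    simp only [hr]
    rw [Finset.sum_sub_distrib, hrow i, ← Finset.sum_div, hssum]
    simp
  -- Cauchy-Schwarz on rows
  have hCS : ∀ i, (t i) ^ 2 / n ≤ ∑ j, (r i j) ^ 2 := by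
    intro i
    have := sq_sum_le_card_mul_sum_sq (s := (univ : Finset (Fin n)))
      (f := fun j => r i j)
    rw [hrrow i, Finset.card_univ, Fintype.card_fin] at this
    rw [div_le_iff₀ hnpos]
    calc (t i)^2 ≤ (n:ℝ) * ∑ j, (r i j)^2 := by exact_mod_cast this
    _ = (∑ j, (r i j)^2) * n := by ring
  -- frame bounds
  have hfq : ‖B‖ ^ 2 ≤ ∑ j, (s j) ^ 2 := frame_ineq n hn q hqunit hqinner hqcent B
  have hfp : ‖C‖ ^ 2 ≤ ∑ i, (t i) ^ 2 := frame_ineq m hm p hpunit hpinner hpcent C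
  -- combine
  have h1 : (1 / (n:ℝ)) * ‖C‖ ^ 2 ≤ ∑ i, ∑ j, (r i j) ^ 2 := by
    calc (1 / (n:ℝ)) * ‖C‖ ^ 2 ≤ (1 / (n:ℝ)) * ∑ i, (t i) ^ 2 := by
          apply mul_le_mul_of_nonneg_left hfp
          positivity
    _ = ∑ i, (t i) ^ 2 / n := by rw [Finset.mul_sum]; exact Finset.sum_congr rfl fun i _ => by ring
    _ ≤ ∑ i, ∑ j, (r i j) ^ 2 := Finset.sum_le_sum fun i _ => hCS i
  have h2 : (1 / (m:ℝ)) * ‖B‖ ^ 2 ≤ (1 / (m:ℝ)) * ∑ j, (s j) ^ 2 := by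
    apply mul_le_mul_of_nonneg_left hfq
    positivity
  show (∑ i, ∑ j, (x i j) ^ 2) ≥ _
  rw [hdec]
  linarith
end

section
/- For N = d+2 and X a non-degenerate stationary logarithmic configuration on S^{d-1} (i.e., distinct unit vectors spanning ℝ^d and satisfying the force equations), the matrix A with entries a_{ij} = (N-1)/N - 1/(1 - x_i·x_j) for i ≠ j and suitable diagonal entries a_{ii} = (N-1)/N - (N-1) + ∑_{j≠i} 1/(1 - x_i·x_j), satisfies A·[X | 𝟙] = 0 where X is the N × d matrix of coordinates and 𝟙 the all-ones vector; consequently rank(A) ≤ N - d - 1 = 1 and every row of A sums to 0. -/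
open Finset RealInnerProductSpace

theorem stmt_19 (d : ℕ) (x : Fin (d + 2) → EuclideanSpace ℝ (Fin d))
    (hunit : ∀ i, ‖x i‖ = 1) (hinj : Function.Injective x)
    (hspan : Submodule.span ℝ (Set.range x) = ⊤)
    (hforce : ∀ i, ∑ j ∈ univ.erase i, (1 / (1 - ⟪x i, x j⟫)) • (x i - x j)
      = (((d : ℝ) + 2) - 1) • x i)
    (A : Matrix (Fin (d + 2)) (Fin (d + 2)) ℝ)
    (hAoff : ∀ i j, i ≠ j → A i j = (((d : ℝ) + 2) - 1) / ((d : ℝ) + 2) - 1 / (1 - ⟪x i, x j⟫))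
    (hAdiag : ∀ i, A i i = (((d : ℝ) + 2) - 1) / ((d : ℝ) + 2) - (((d : ℝ) + 2) - 1)
      + ∑ j ∈ univ.erase i, 1 / (1 - ⟪x i, x j⟫)) :
    (∀ i, ∑ j, A i j • x j = 0) ∧ (∀ i, ∑ j, A i j = 0) ∧ A.rank ≤ 1 := by
  -- sum of all x is 0
  have hsum0 : ∑ j, x j = 0 := by
    set f : Fin (d+2) → Fin (d+2) → EuclideanSpace ℝ (Fin d) :=
      fun i j => (1 / (1 - ⟪x i, x j⟫)) • (x i - x j) with hf
    have hanti : ∀ i j, f i j = - f j i := by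
      intro i j
      simp only [hf]
      rw [real_inner_comm, ← smul_neg, neg_sub]
    have hdiag0 : ∀ i, f i i = 0 := by intro i; simp [hf]
    have hS : ∑ i, ∑ j, f i j = (((d : ℝ) + 2) - 1) • ∑ i, x i := by
      rw [Finset.smul_sum]
      refine Finset.sum_congr rfl fun i _ => ?_
      rw [← Finset.sum_erase _ (hdiag0 i)]
      exact hforce i
    have hS0 : ∑ i, ∑ j, f i j = 0 := by
      have h1 : ∑ i, ∑ j, f i j = - ∑ i, ∑ j, f i j := by
        nth_rewrite 1 [Finset.sum_comm]
        rw [← Finset.sum_neg_distrib]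
        refine Finset.sum_congr rfl fun i _ => ?_
        rw [← Finset.sum_neg_distrib]
        exact Finset.sum_congr rfl fun j _ => hanti j i
      have h2 : (2:ℝ) • ∑ i, ∑ j, f i j = 0 := by
        rw [two_smul]; nth_rewrite 1 [h1]; simp
      have := smul_eq_zero.mp h2
      simpa using this
    have : (((d : ℝ) + 2) - 1) • ∑ i, x i = 0 := by rw [← hS, hS0]
    rcases smul_eq_zero.mp this with h | h
    · exfalso; revert h; push_cast; intro h; nlinarith [Nat.cast_nonneg (α := ℝ) d]
    · exact h
  -- row sums
  have hrow : ∀ i, ∑ j, A i j = 0 := by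
    intro i
    rw [← Finset.add_sum_erase _ _ (mem_univ i), hAdiag i,
      Finset.sum_congr rfl (fun j hj => hAoff i j (Ne.symm (Finset.mem_erase.mp hj).1))]
    rw [Finset.sum_sub_distrib, Finset.sum_const,
      Finset.card_erase_of_mem (mem_univ i), Finset.card_univ, Fintype.card_fin]
    push_cast [nsmul_eq_mul]
    field_simp
    ring
  -- A annihilates x
  have hAx : ∀ i, ∑ j, A i j • x j = 0 := by
    intro i
    have hse : ∑ j ∈ univ.erase i, x j = - x i := by
      rw [Finset.sum_erase_eq_sub (mem_univ i), hsum0]; simp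
    have hforce' : ∑ j ∈ univ.erase i, (1 / (1 - ⟪x i, x j⟫)) • x j
        = (∑ j ∈ univ.erase i, 1 / (1 - ⟪x i, x j⟫)) • x i - (((d : ℝ) + 2) - 1) • x i := by
      have h := hforce i
      rw [Finset.sum_congr rfl (fun j _ => smul_sub (1 / (1 - ⟪x i, x j⟫)) (x i) (x j)),
        Finset.sum_sub_distrib, ← Finset.sum_smul] at h
      linear_combination (norm := module) -h
    have hoff : ∑ j ∈ univ.erase i, A i j • x j
        = ((((d : ℝ) + 2) - 1) / ((d : ℝ) + 2)) • (∑ j ∈ univ.erase i, x j)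
          - ∑ j ∈ univ.erase i, (1 / (1 - ⟪x i, x j⟫)) • x j := by
      rw [Finset.smul_sum, ← Finset.sum_sub_distrib]
      refine Finset.sum_congr rfl fun j hj => ?_
      rw [hAoff i j (Ne.symm (Finset.mem_erase.mp hj).1), sub_smul]
    rw [← Finset.add_sum_erase _ _ (mem_univ i), hAdiag i, hoff, hse, hforce']
    module
  refine ⟨hAx, hrow, ?_⟩
  -- rank bound
  set φ : (EuclideanSpace ℝ (Fin d) × ℝ) →ₗ[ℝ] (Fin (d + 2) → ℝ) :=
    { toFun := fun p j => ⟪p.1, x j⟫ + p.2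
      map_add' := by intro p q; funext j; simp [inner_add_left]; ring
      map_smul' := by intro c p; funext j; simp [real_inner_smul_left, mul_add, Finset.mul_sum, mul_assoc] } with hφ
  have hφapp : ∀ v t j, φ (v, t) j = ⟪v, x j⟫ + t := fun v t j => rfl
  have hφinj : Function.Injective φ := by
    rw [← LinearMap.ker_eq_bot, Submodule.eq_bot_iff]
    rintro ⟨v, t⟩ hp
    rw [LinearMap.mem_ker] at hp
    have hp' : ∀ j, ⟪v, x j⟫ + t = 0 := fun j => congrFun hp j
    have hs : ∑ j, (⟪v, x j⟫ + t) = 0 := Finset.sum_eq_zero fun j _ => hp' j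
    rw [Finset.sum_add_distrib, ← inner_sum, hsum0, inner_zero_right,
      Finset.sum_const, Finset.card_univ, Fintype.card_fin] at hs
    have ht : t = 0 := by
      simp only [zero_add, nsmul_eq_mul] at hs
      have : (((d + 2 : ℕ)) : ℝ) ≠ 0 := by positivity
      exact (mul_eq_zero.mp hs).resolve_left this
    have hv : v = 0 := by
      have hvmem : v ∈ (Submodule.span ℝ (Set.range x))ᗮ := by
        rw [Submodule.mem_orthogonal']
        intro u hu
        induction hu using Submodule.span_induction with
        | mem u hu =>
          obtain ⟨j, rfl⟩ := hu
          have := hp' j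
          rw [ht, add_zero] at this
          exact this
        | zero => exact inner_zero_right v
        | add u w _ _ h1 h2 => rw [inner_add_right, h1, h2, add_zero]
        | smul c u _ h1 => rw [real_inner_smul_right, h1, mul_zero]
      rw [hspan, Submodule.top_orthogonal_eq_bot] at hvmem
      simpa using hvmem
    simp [Prod.ext_iff, hv, ht]
  have hrange : LinearMap.range φ ≤ LinearMap.ker A.mulVecLin := by
    rintro _ ⟨⟨v, t⟩, rfl⟩
    rw [LinearMap.mem_ker]
    funext i
    rw [Matrix.mulVecLin_apply, Matrix.mulVec, dotProduct]
    simp only [hφapp, Pi.zero_apply]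
    calc ∑ j, A i j * (⟪v, x j⟫ + t)
        = ⟪v, ∑ j, A i j • x j⟫ + (∑ j, A i j) * t := by
          rw [inner_sum, Finset.sum_mul, ← Finset.sum_add_distrib]
          refine Finset.sum_congr rfl fun j _ => ?_
          rw [real_inner_smul_right]; ring
      _ = 0 := by rw [hAx i, hrow i, inner_zero_right]; ring
  have hker : d + 1 ≤ Module.finrank ℝ ↥(LinearMap.ker A.mulVecLin) := by
    have h1 := Submodule.finrank_mono hrange
    rwa [LinearMap.finrank_range_of_inj hφinj, Module.finrank_prod,
      finrank_euclideanSpace_fin, Module.finrank_self] at h1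
  have hrank : A.rank + Module.finrank ℝ ↥(LinearMap.ker A.mulVecLin) = d + 2 := by
    rw [Matrix.rank, LinearMap.finrank_range_add_finrank_ker,
      Module.finrank_fintype_fun_eq_card, Fintype.card_fin]
  omega
end
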